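/- arXiv:1304.0242 — 7 statements merged into one kernel-verified Lean document; each statement's English description precedes it below -/
import Mathlib

section
/- Let n, r, k be positive integers with k ≥ 2 and k·r ≤ (k−1)·n, and let 𝓕 be a k-wise intersecting family of r-element subsets of {1,…,n}. Then |𝓕| ≤ C(n−1, r−1) (binomial coefficient n−1 choose r−1). -/
/-!
If `(k - 1)(n - 1) < k r`, Katona's circle method applies. Along a cyclic order of the ground set
at most `r` arcs of length `r` belong to `𝓕`: among any `r + 1` of them one finds `k` arcs whose
complements, arcs of length `d = n - r` with `n ≤ k d < n + k`, cover the circle. Averaging over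
all cyclic orders gives `n |𝓕| ≤ r C(n, r) = n C(n - 1, r - 1)`.

Otherwise shift `𝓕`, which keeps it `k`-wise intersecting, and split it according to whether a set
contains `n`. The sets avoiding `n` form a family on `n - 1` points. The link of `n` is again
`k`-wise intersecting: by counting, some point `x < n` is missed by two of its sets `f l`, `f m`,
and shiftedness lets `n` be replaced by `x` in `f l ∪ {n}`, so a common point of the modified sets
is a common point of the `f`'s. Induction on `n` and Pascal's rule conclude.
-/

/-- A family is `k`-wise intersecting: any `k` (not necessarily distinct) members
have a common element. -/
def KWiseIntersecting (k : ℕ) (𝓕 : Finset (Finset ℕ)) : Prop :=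
  ∀ f : Fin k → Finset ℕ, (∀ i, f i ∈ 𝓕) → ∃ v, ∀ i, v ∈ f i

open Finset Fintype
open scoped FinsetFamily

theorem le_mul_sub_of_mul_le_pred_mul {k r n : ℕ} (hk : 0 < k) (h : k * r ≤ (k - 1) * n) :
    n ≤ k * (n - r) := by
  obtain ⟨k, rfl⟩ : ∃ k', k = k' + 1 := ⟨k - 1, by omega⟩
  rw [Nat.add_sub_cancel] at h
  have hrn : r ≤ n := by nlinarith
  obtain ⟨d, rfl⟩ := Nat.exists_eq_add_of_le hrn
  rw [Nat.add_sub_cancel_left]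
  nlinarith

theorem le_choose_of_succ_mul_le {n r a : ℕ} (h : (n + 1) * a ≤ r * (n + 1).choose r) :
    a ≤ n.choose (r - 1) := by
  cases r with
  | zero => simp_all
  | succ r =>
    rw [mul_comm (r + 1), ← Nat.add_one_mul_choose_eq] at h
    simpa using Nat.le_of_mul_le_mul_left h n.succ_pos

theorem add_le_choose_of_le_choose {n r a b : ℕ} (hn : 0 < n) (hr : 1 < r)
    (ha : a ≤ (n - 1).choose (r - 2)) (hb : b ≤ (n - 1).choose (r - 1)) :
    a + b ≤ n.choose (r - 1) := by
  obtain ⟨n, rfl⟩ : ∃ n', n = n' + 1 := ⟨n - 1, by omega⟩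
  obtain ⟨r, rfl⟩ : ∃ r', r = r' + 2 := ⟨r - 2, by omega⟩
  simpa [Nat.choose_succ_succ'] using Nat.add_le_add ha hb

theorem exists_forall_add_mem {G : Type*} [AddGroup G] [Fintype G] [DecidableEq G]
    {S O : Finset G} (h : #O * (card G - #S) < #S) : ∃ u ∈ S, ∀ o ∈ O, u + o ∈ S := by
  by_contra! hbad
  have hcover : S ⊆ O.biUnion fun o => {u ∈ S | u + o ∉ S} := fun u hu => by
    obtain ⟨o, ho, huo⟩ := hbad u hu
    exact mem_biUnion.2 ⟨o, ho, mem_filter.2 ⟨hu, huo⟩⟩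
  have hpiece : ∀ o ∈ O, #{u ∈ S | u + o ∉ S} ≤ card G - #S := fun o _ => by
    rw [← card_compl]
    exact card_le_card_of_injOn (· + o) (fun u hu => by simpa using (mem_filter.1 hu).2)
      (add_left_injective o).injOn
  exact h.not_ge ((card_le_card hcover).trans (card_biUnion_le_card_mul _ _ _ hpiece))

theorem exists_mem_notMem_notMem_of_card_lt_sum {ι α : Type*} [Fintype ι] [DecidableEq α]
    {U : Finset α} (f : ι → Finset α) (h : #U < ∑ l, #(U \ f l)) :
    ∃ x ∈ U, ∃ l m, l ≠ m ∧ x ∉ f l ∧ x ∉ f m := by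
  have hcount : ∑ x ∈ U, #{l | x ∉ f l} = ∑ l, #(U \ f l) := by
    simp_rw [← filter_notMem_eq_sdiff]
    exact sum_card_bipartiteAbove_eq_sum_card_bipartiteBelow (fun x l => x ∉ f l)
  rw [← hcount, card_eq_sum_ones U] at h
  obtain ⟨x, hx, hlt⟩ := exists_lt_of_sum_lt h
  obtain ⟨l, hl, m, hm, hlm⟩ := one_lt_card.1 hlt
  exact ⟨x, hx, l, m, hlm, (mem_filter.1 hl).2, (mem_filter.1 hm).2⟩

namespace Fin

open Fin.NatCast

variable {m : ℕ} [NeZero m]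

/-- Consecutive offsets `min (j d) (m - d)`, `j < k`, are at most `d` apart around the cycle
`Fin m`, so every cyclic window of length `d` contains one of them. -/
theorem exists_le_val_sub_natCast_min {k d : ℕ} (hd : 0 < d) (hm : m ≤ k * d) (z : Fin m) :
    ∃ j < k, m - d ≤ ((z - ((min (j * d) (m - d) : ℕ) : Fin m) : Fin m) : ℕ) := by
  have hk : 0 < k := Nat.pos_of_ne_zero fun hk => by simp [hk] at hm; exact NeZero.ne m hm
  by_cases hz : m - d ≤ z
  · exact ⟨0, hk, by simpa using hz⟩
  set j : ℕ := (z : ℕ) / d + 1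
  have hjd : (z : ℕ) < j * d ∧ j * d ≤ z + d := by
    have := Nat.div_add_mod (z : ℕ) d
    have := Nat.mod_lt (z : ℕ) hd
    constructor <;> simp only [j, add_mul, one_mul] <;>
      linarith [mul_comm d ((z : ℕ) / d), Nat.zero_le ((z : ℕ) % d)]
  have hj : j < k := by
    by_contra! hkj
    have := Nat.mul_le_mul_right d hkj
    omega
  refine ⟨j, hj, ?_⟩
  have hval : (((min (j * d) (m - d) : ℕ) : Fin m) : ℕ) = min (j * d) (m - d) :=
    Fin.val_cast_of_lt (by omega)
  have hlt : z < ((min (j * d) (m - d) : ℕ) : Fin m) := by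
    rw [Fin.lt_def, hval]
    omega
  rw [Fin.coe_sub_iff_lt.2 hlt, hval]
  omega

theorem card_le_of_forall_exists_val_sub_lt {k r : ℕ} {S : Finset (Fin m)}
    (hm : m ≤ k * (m - r)) (hkm : k * (m - r) < m + k)
    (hS : ∀ s : Fin k → Fin m, (∀ l, s l ∈ S) → ∃ y, ∀ l, ((y - s l : Fin m) : ℕ) < r) :
    #S ≤ r := by
  set d := m - r with hd_def
  have hm0 : 0 < m := Nat.pos_of_neZero m
  have hd : 0 < d := Nat.pos_of_ne_zero fun hd => by simp [hd] at hm; omega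
  by_contra! hSr
  set o : ℕ → Fin m := fun j => ((min (j * d) (m - d) : ℕ) : Fin m)
  have hSm : #S ≤ m := by simpa using card_le_univ S
  have hO : #((Icc 1 (k - 1)).image o) ≤ k - 1 := by
    simpa using card_image_le (s := Icc 1 (k - 1)) (f := o)
  -- `S` is so large that some `u ∈ S` has all `u + o j` in `S`; by the choice of the offsets,
  -- the `k` arcs starting at these points have no common point.
  have hcount : (k - 1) * (m - #S) < #S := by
    obtain ⟨k, rfl⟩ : ∃ k', k = k' + 1 := ⟨k - 1, by omega⟩
    obtain ⟨d', hd'⟩ : ∃ d', d = d' + 1 := ⟨d - 1, by omega⟩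
    have : m - #S ≤ d' := by omega
    have hmrd : m = r + d' + 1 := by omega
    rw [hd'] at hkm
    rw [Nat.add_sub_cancel]
    nlinarith
  obtain ⟨u, hu, huo⟩ := exists_forall_add_mem (S := S) (O := (Icc 1 (k - 1)).image o) <| by
    rw [Fintype.card_fin]
    exact (Nat.mul_le_mul_right _ hO).trans_lt hcount
  obtain ⟨y, hy⟩ := hS (fun l => u + o l) fun l => by
    rcases Nat.eq_zero_or_pos l with hl | hl
    · simpa [o, hl] using hu
    · exact huo _ (mem_image_of_mem o (mem_Icc.2 ⟨hl, by omega⟩))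
  obtain ⟨j, hj, hle⟩ := exists_le_val_sub_natCast_min hd hm (y - u)
  have := hy ⟨j, hj⟩
  simp only [o, sub_add_eq_sub_sub] at this
  omega

end Fin

namespace Numbering

variable {X : Type*} [Fintype X]

theorem IsPrefix.eq_of_card_eq {f : Numbering X} {s t : Finset X} (hs : IsPrefix f s)
    (ht : IsPrefix f t) (h : #s = #t) : s = t :=
  (hs.subset_of_card_le_card ht h.le).antisymm (ht.subset_of_card_le_card hs h.ge)

variable [NeZero (card X)]

/-- The arcs of length `r` of the cyclic order `f` are the prefixes of size `r` of the
numberings `rotate i f`, which start counting at position `i`. -/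
def rotate (i : Fin (card X)) : Numbering X ≃ Numbering X :=
  Equiv.equivCongr (Equiv.refl X) (Equiv.subRight i)

@[simp]
theorem rotate_apply (i : Fin (card X)) (f : Numbering X) (x : X) : rotate i f x = f x - i :=
  rfl

variable [DecidableEq X]

theorem card_filter_isPrefix_rotate (i : Fin (card X)) (s : Finset X) :
    #{f | IsPrefix (rotate i f) s} = (#s).factorial * (card X - #s).factorial := by
  rw [← card_prefixed]
  exact card_equiv (rotate i) fun f => by simp

theorem card_filter_isPrefix_rotate_le {k r : ℕ} {𝓕 : Finset (Finset X)} (h𝓕 : ∀ F ∈ 𝓕, #F = r)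
    (hint : ∀ F : Fin k → Finset X, (∀ l, F l ∈ 𝓕) → ∃ x, ∀ l, x ∈ F l)
    (hm : card X ≤ k * (card X - r)) (hkm : k * (card X - r) < card X + k) (f : Numbering X) :
    #{p ∈ (univ : Finset (Fin (card X))) ×ˢ 𝓕 | IsPrefix (rotate p.1 f) p.2} ≤ r := by
  set P := {p ∈ (univ : Finset (Fin (card X))) ×ˢ 𝓕 | IsPrefix (rotate p.1 f) p.2}
  have hinj : Set.InjOn Prod.fst (P : Set (Fin (card X) × Finset X)) := by
    rintro ⟨i, F⟩ hF ⟨j, G⟩ hG (rfl : i = j)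
    simp only [coe_filter, mem_product, mem_univ, true_and, Set.mem_ofPred_eq, P] at hF hG
    rw [hF.2.eq_of_card_eq hG.2 (by rw [h𝓕 F hF.1, h𝓕 G hG.1])]
  rw [← card_image_of_injOn hinj]
  refine Fin.card_le_of_forall_exists_val_sub_lt hm hkm fun s hs => ?_
  choose p hp hps using fun l => mem_image.1 (hs l)
  simp only [mem_filter, mem_product, mem_univ, true_and, P] at hp
  obtain ⟨x, hx⟩ := hint (fun l => (p l).2) fun l => (hp l).1
  refine ⟨f x, fun l => ?_⟩
  simpa [h𝓕 _ (hp l).1, ← hps l] using ((hp l).2 x).1 (hx l)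

end Numbering

theorem card_mul_le_choose_of_forall_exists_mem {X : Type*} [Fintype X] [DecidableEq X]
    {k r : ℕ} {𝓕 : Finset (Finset X)} (h𝓕 : ∀ F ∈ 𝓕, #F = r)
    (hint : ∀ F : Fin k → Finset X, (∀ l, F l ∈ 𝓕) → ∃ x, ∀ l, x ∈ F l)
    (hm : card X ≤ k * (card X - r)) (hkm : k * (card X - r) < card X + k) :
    card X * #𝓕 ≤ r * (card X).choose r := by
  rcases Nat.eq_zero_or_pos (card X) with hX | hX
  · simp [hX]
  have : NeZero (card X) := ⟨hX.ne'⟩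
  have hrX : r ≤ card X := by
    by_contra!
    rw [Nat.sub_eq_zero_of_le this.le, mul_zero] at hm
    omega
  have hdouble := card_mul_le_card_mul (fun p f => Numbering.IsPrefix (Numbering.rotate p.1 f) p.2)
    (s := (univ : Finset (Fin (card X))) ×ˢ 𝓕) (t := univ)
    (m := r.factorial * (card X - r).factorial) (n := r)
    (fun p hp => by
      rw [← h𝓕 p.2 (mem_product.1 hp).2, ← Numbering.card_filter_isPrefix_rotate p.1]; rfl)
    (fun f _ => Numbering.card_filter_isPrefix_rotate_le h𝓕 hint hm hkm f)
  rw [card_product, card_univ, card_univ, Fintype.card_fin, card_numbering,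
    ← Nat.choose_mul_factorial_mul_factorial hrX] at hdouble
  refine Nat.le_of_mul_le_mul_right ?_ (by positivity : 0 < r.factorial * (card X - r).factorial)
  linarith

namespace UV

variable {α : Type*} [DecidableEq α]

theorem compress_singleton (i j : α) (A : Finset α) :
    compress {i} {j} A = if i ∉ A ∧ j ∈ A then (insert i A).erase j else A := by
  simp only [compress, disjoint_singleton_left, singleton_subset_iff, sup_eq_union,
    sdiff_singleton_eq_erase, union_singleton]

theorem exists_mem_of_mem_compression_singleton {i j : α} {𝓐 : Finset (Finset α)} {A : Finset α}
    (hij : i ≠ j) (hA : A ∈ 𝓒 {i} {j} 𝓐) :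
    ∃ B ∈ 𝓐, (∀ x ∈ B, x ≠ i → x ≠ j → x ∈ A) ∧ (j ∈ B → i ∈ A) ∧ (A ∉ 𝓐 → i ∉ B) := by
  rcases mem_compression.1 hA with ⟨hA𝓐, hcA⟩ | ⟨hA𝓐, B, hB, rfl⟩
  · by_cases hmoved : i ∉ A ∧ j ∈ A
    · rw [compress_singleton, if_pos hmoved] at hcA
      exact ⟨_, hcA, by aesop, by simp, fun h => absurd hA𝓐 h⟩
    · exact ⟨A, hA𝓐, fun x hx _ _ => hx, by tauto, fun h => absurd hA𝓐 h⟩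
  · rw [compress_singleton] at hA𝓐 ⊢
    split_ifs at hA𝓐 ⊢ with hmoved
    · exact ⟨B, hB, by aesop, by simp [hij], fun _ => hmoved.1⟩
    · exact absurd hB hA𝓐

theorem compression_subset_powersetCard {i j : α} {𝓐 : Finset (Finset α)} {U : Finset α} {r : ℕ}
    (hi : i ∈ U) (h : 𝓐 ⊆ powersetCard r U) : 𝓒 {i} {j} 𝓐 ⊆ powersetCard r U := by
  intro A hA
  rcases mem_compression.1 hA with ⟨hA, -⟩ | ⟨-, B, hB, rfl⟩
  · exact h hA
  obtain ⟨hBU, hBr⟩ := mem_powersetCard.1 (h hB)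
  refine mem_powersetCard.2 ⟨?_, by rw [card_compress (by simp), hBr]⟩
  rw [compress_singleton]
  split_ifs
  · exact (erase_subset _ _).trans (insert_subset hi hBU)
  · exact hBU

theorem sum_compression_lt {β : Type*} [GeneralizedBooleanAlgebra β]
    [DecidableRel (@Disjoint β _ _)] [DecidableLE β] [DecidableEq β] {u v : β} {s : Finset β}
    {w : β → ℕ} (hw : ∀ a, compress u v a ≠ a → w (compress u v a) < w a) (h : 𝓒 u v s ≠ s) :
    ∑ a ∈ 𝓒 u v s, w a < ∑ a ∈ s, w a := by
  have hsplit : {a ∈ s | compress u v a ∈ s} ∪ {a ∈ s | compress u v a ∉ s} = s :=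
    filter_union_filter_not_eq _ _
  have hmoved : {a ∈ s | compress u v a ∉ s}.Nonempty := by
    contrapose! h
    rw [compression, filter_image, h, image_empty, union_empty]
    rwa [h, union_empty] at hsplit
  rw [compression, sum_union compress_disjoint]
  conv_rhs => rw [← hsplit]
  rw [sum_union (disjoint_filter_filter_not _ _ _), add_lt_add_iff_left, filter_image,
    sum_image compress_injOn]
  refine sum_lt_sum_of_nonempty hmoved fun a ha => hw a fun h => ?_
  rw [mem_filter, h] at ha
  exact ha.2 ha.1

end UV

section Subfamily

variable {α : Type*} [DecidableEq α] {𝓐 : Finset (Finset α)} {U : Finset α} {r : ℕ}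

theorem nonMemberSubfamily_subset_powersetCard (a : α) (h : 𝓐 ⊆ powersetCard r U) :
    𝓐.nonMemberSubfamily a ⊆ powersetCard r (U.erase a) := fun s hs => by
  obtain ⟨hs, has⟩ := mem_nonMemberSubfamily.1 hs
  obtain ⟨hsU, hsr⟩ := mem_powersetCard.1 (h hs)
  exact mem_powersetCard.2 ⟨subset_erase.2 ⟨hsU, has⟩, hsr⟩

theorem memberSubfamily_subset_powersetCard (a : α) (h : 𝓐 ⊆ powersetCard r U) :
    𝓐.memberSubfamily a ⊆ powersetCard (r - 1) (U.erase a) := fun s hs => by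
  obtain ⟨hs, has⟩ := mem_memberSubfamily.1 hs
  obtain ⟨hsU, hsr⟩ := mem_powersetCard.1 (h hs)
  rw [card_insert_of_notMem has] at hsr
  exact mem_powersetCard.2 ⟨subset_erase.2 ⟨(subset_insert a s).trans hsU, has⟩, by omega⟩

end Subfamily

def Shifted (n : ℕ) (𝓐 : Finset (Finset ℕ)) : Prop :=
  ∀ ⦃i j : ℕ⦄, 1 ≤ i → i < j → j ≤ n → UV.IsCompressed {i} {j} 𝓐

theorem Shifted.insert_mem {n i j : ℕ} {𝓐 : Finset (Finset ℕ)} {A : Finset ℕ} (h : Shifted n 𝓐)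
    (hi : 1 ≤ i) (hij : i < j) (hj : j ≤ n) (hA : insert j A ∈ 𝓐) (hiA : i ∉ A) (hjA : j ∉ A) :
    insert i A ∈ 𝓐 := by
  have := UV.compress_mem_compression (u := {i}) (v := {j}) hA
  rwa [(h hi hij hj).eq, UV.compress_singleton, if_pos (by simp [hiA, hij.ne]),
    erase_insert_of_ne hij.ne, erase_insert hjA] at this

theorem exists_shifted_of_forall_compression {n : ℕ} {P : Finset (Finset ℕ) → Prop}
    (hP : ∀ ⦃𝓐 i j⦄, 1 ≤ i → i < j → j ≤ n → P 𝓐 → P (𝓒 {i} {j} 𝓐)) (𝓐 : Finset (Finset ℕ))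
    (h𝓐 : P 𝓐) : ∃ 𝓑, #𝓑 = #𝓐 ∧ P 𝓑 ∧ Shifted n 𝓑 := by
  by_cases hsh : Shifted n 𝓐
  · exact ⟨𝓐, rfl, h𝓐, hsh⟩
  simp only [Shifted, not_forall] at hsh
  obtain ⟨i, j, hi, hij, hj, hne⟩ := hsh
  have : ∑ A ∈ 𝓒 {i} {j} 𝓐, ∑ a ∈ A, 2 ^ a < ∑ A ∈ 𝓐, ∑ a ∈ A, 2 ^ a :=
    UV.sum_compression_lt (fun A hA => (geomSum_lt_geomSum_iff_toColex_lt_toColex le_rfl).2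
      (UV.toColex_compress_lt_toColex (hU := singleton_nonempty i) (hV := singleton_nonempty j)
        (by simpa using hij) hA)) hne
  obtain ⟨𝓑, hcard, h𝓑, hsh⟩ := exists_shifted_of_forall_compression hP _ (hP hi hij hj h𝓐)
  exact ⟨𝓑, hcard.trans (UV.card_compression _ _ _), h𝓑, hsh⟩
termination_by ∑ A ∈ 𝓐, ∑ a ∈ A, 2 ^ a

namespace KWiseIntersecting

variable {k : ℕ} {𝓐 : Finset (Finset ℕ)}

theorem mono {𝓑 : Finset (Finset ℕ)} (h : KWiseIntersecting k 𝓐) (h𝓑 : 𝓑 ⊆ 𝓐) :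
    KWiseIntersecting k 𝓑 :=
  fun f hf => h f fun l => h𝓑 (hf l)

theorem nonempty_of_mem (h : KWiseIntersecting k 𝓐) (hk : 0 < k) {A : Finset ℕ} (hA : A ∈ 𝓐) :
    A.Nonempty :=
  let ⟨v, hv⟩ := h (fun _ => A) fun _ => hA
  ⟨v, hv ⟨0, hk⟩⟩

theorem eq_empty_of_subset_powersetCard_zero {U : Finset ℕ} (h : KWiseIntersecting k 𝓐)
    (hk : 0 < k) (h𝓐 : 𝓐 ⊆ powersetCard 0 U) : 𝓐 = ∅ :=
  eq_empty_of_forall_notMem fun _ hA =>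
    (h.nonempty_of_mem hk hA).ne_empty (card_eq_zero.1 (mem_powersetCard.1 (h𝓐 hA)).2)

theorem compression {i j : ℕ} (h : KWiseIntersecting k 𝓐) (hij : i ≠ j) :
    KWiseIntersecting k (𝓒 {i} {j} 𝓐) := by
  intro A hA
  by_cases hall : ∀ l, A l ∈ 𝓐
  · exact h A hall
  obtain ⟨l₀, hl₀⟩ := not_forall.1 hall
  choose B hB hBA hBj hBi using fun l => UV.exists_mem_of_mem_compression_singleton hij (hA l)
  obtain ⟨v, hv⟩ := h B hB
  have hvi : v ≠ i := fun hvi => hBi l₀ hl₀ (hvi ▸ hv l₀)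
  by_cases hvj : v = j
  · exact ⟨i, fun l => hBj l (hvj ▸ hv l)⟩
  · exact ⟨v, fun l => hBA l v (hv l) hvi hvj⟩

theorem exists_shifted {n r : ℕ} (h : KWiseIntersecting k 𝓐) (h𝓐 : 𝓐 ⊆ powersetCard r (Icc 1 n)) :
    ∃ 𝓑, #𝓑 = #𝓐 ∧ (𝓑 ⊆ powersetCard r (Icc 1 n) ∧ KWiseIntersecting k 𝓑) ∧ Shifted n 𝓑 :=
  exists_shifted_of_forall_compression
    (fun _ _ _ hi hij hj h𝓑 => ⟨UV.compression_subset_powersetCard (mem_Icc.2 ⟨hi, by omega⟩) h𝓑.1,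
      h𝓑.2.compression hij.ne⟩) 𝓐 ⟨h𝓐, h⟩

theorem memberSubfamily {n r : ℕ} (hk : 0 < k) (h : KWiseIntersecting k 𝓐)
    (h𝓐 : 𝓐 ⊆ powersetCard r (Icc 1 n)) (hsh : Shifted n 𝓐) (hkr : k * r ≤ (k - 1) * n) :
    KWiseIntersecting k (𝓐.memberSubfamily n) := by
  intro f hf
  obtain ⟨hins, hnf⟩ := forall_and.1 fun l => mem_memberSubfamily.1 (hf l)
  have hsub : ∀ l, f l ⊆ Ico 1 n ∧ #(f l) + 1 = r := fun l => by
    obtain ⟨hsub, hcard⟩ := mem_powersetCard.1 (h𝓐 (hins l))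
    refine ⟨fun x hx => ?_, by rw [← hcard, card_insert_of_notMem (hnf l)]⟩
    obtain ⟨hx1, hxn⟩ := mem_Icc.1 (hsub (mem_insert_of_mem hx))
    exact mem_Ico.2 ⟨hx1, hxn.lt_of_ne (by rintro rfl; exact hnf l hx)⟩
  obtain ⟨x, hx, l, m, hlm, hxl, hxm⟩ :
      ∃ x ∈ Ico 1 n, ∃ l m, l ≠ m ∧ x ∉ f l ∧ x ∉ f m := by
    refine exists_mem_notMem_notMem_of_card_lt_sum f ?_
    have hcompl : ∀ l, #(Ico 1 n \ f l) = n - r := fun l => by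
      rw [card_sdiff_of_subset (hsub l).1, Nat.card_Ico, ← (hsub l).2]
      omega
    have hr : 0 < r := by have := (hsub ⟨0, hk⟩).2; omega
    simp only [hcompl, sum_const, card_univ, Fintype.card_fin, smul_eq_mul, Nat.card_Ico]
    have hn : 0 < n := Nat.pos_of_ne_zero fun hn => by rw [hn, mul_zero] at hkr; nlinarith
    have := le_mul_sub_of_mul_le_pred_mul hk hkr
    omega
  obtain ⟨hx1, hxn⟩ := mem_Ico.1 hx
  have hmoved : insert x (f l) ∈ 𝓐 := hsh.insert_mem hx1 hxn le_rfl (hins l) hxl (hnf l)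
  obtain ⟨v, hv⟩ := h (Function.update (fun p => insert n (f p)) l (insert x (f l))) fun p => by
    rcases eq_or_ne p l with rfl | hp
    · simpa using hmoved
    · simpa [hp] using hins p
  have hvl : v ∈ insert x (f l) := by simpa using hv l
  have hvm : v ∈ insert n (f m) := by simpa [hlm.symm] using hv m
  have hvx : v ≠ x := by rintro rfl; exact (mem_insert.1 hvm).elim hxn.ne hxm
  have hvn : v ≠ n := by rintro rfl; exact (mem_insert.1 hvl).elim hxn.ne' (hnf l)
  refine ⟨v, fun p => ?_⟩
  rcases eq_or_ne p l with rfl | hp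
  · simpa [hvx] using hvl
  · simpa [hp, hvn] using hv p

theorem card_mul_le {r : ℕ} {U : Finset ℕ} (h : KWiseIntersecting k 𝓐)
    (h𝓐 : 𝓐 ⊆ powersetCard r U) (hU : #U ≤ k * (#U - r)) (hkU : k * (#U - r) < #U + k) :
    #U * #𝓐 ≤ r * (#U).choose r := by
  rcases Nat.eq_zero_or_pos k with rfl | hk
  · simp_all
  have hsub : ∀ A ∈ 𝓐, ∀ x ∈ A, x ∈ U := fun A hA => (mem_powersetCard.1 (h𝓐 hA)).1
  have hinj : Set.InjOn (Finset.subtype (· ∈ U)) 𝓐 := fun A hA B hB hAB => by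
    rw [← subtype_map_of_mem (hsub A hA), ← subtype_map_of_mem (hsub B hB), hAB]
  rw [← card_coe U] at hU hkU ⊢
  rw [← card_image_of_injOn hinj]
  refine card_mul_le_choose_of_forall_exists_mem (fun A hA => ?_) (fun A hA => ?_) hU hkU
  · obtain ⟨B, hB, rfl⟩ := mem_image.1 hA
    rw [card_subtype, filter_true_of_mem (hsub B hB), (mem_powersetCard.1 (h𝓐 hB)).2]
  · choose B hB hBA using fun l => mem_image.1 (hA l)
    obtain ⟨v, hv⟩ := h B hB
    refine ⟨⟨v, hsub _ (hB ⟨0, hk⟩) v (hv ⟨0, hk⟩)⟩, fun l => ?_⟩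
    rw [← hBA l]
    exact mem_subtype.2 (hv l)

theorem card_le_choose_of_lt {n r : ℕ} (hk : 0 < k) (h : KWiseIntersecting k 𝓐)
    (h𝓐 : 𝓐 ⊆ powersetCard r (Icc 1 (n + 1))) (hkr : k * r ≤ (k - 1) * (n + 1))
    (hb : (k - 1) * n < k * r) : #𝓐 ≤ n.choose (r - 1) := by
  have hU : #(Icc 1 (n + 1)) = n + 1 := by simp
  have := h.card_mul_le h𝓐 (by rw [hU]; exact le_mul_sub_of_mul_le_pred_mul hk hkr) <| by
    rw [hU, Nat.mul_sub, mul_add, mul_one]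
    rw [Nat.sub_one_mul] at hb
    omega
  exact le_choose_of_succ_mul_le (hU ▸ this)

theorem card_le_choose (hk : 0 < k) :
    ∀ {n r : ℕ} {𝓐 : Finset (Finset ℕ)}, KWiseIntersecting k 𝓐 →
      𝓐 ⊆ powersetCard r (Icc 1 n) → k * r ≤ (k - 1) * n → #𝓐 ≤ (n - 1).choose (r - 1)
  | 0, r, 𝓐, h, h𝓐, _ => by
    have : 𝓐 = ∅ := eq_empty_of_forall_notMem fun A hA => by
      obtain ⟨x, hx⟩ := h.nonempty_of_mem hk hA
      simpa using (mem_powersetCard.1 (h𝓐 hA)).1 hx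
    simp [this]
  | n + 1, r, 𝓐, h, h𝓐, hkr => by
    by_cases hb : (k - 1) * n < k * r
    · exact h.card_le_choose_of_lt hk h𝓐 hkr hb
    push Not at hb
    obtain ⟨𝓑, hcard, ⟨h𝓑, hint𝓑⟩, hsh⟩ := h.exists_shifted h𝓐
    have hIcc : (Icc 1 (n + 1)).erase (n + 1) = Icc 1 n := by
      rw [Icc_erase_right, Ico_add_one_right_eq_Icc]
    have h𝓑₀ := nonMemberSubfamily_subset_powersetCard (n + 1) h𝓑
    have h𝓑₁ := memberSubfamily_subset_powersetCard (n + 1) h𝓑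
    rw [hIcc] at h𝓑₀ h𝓑₁
    have h₀ := card_le_choose (𝓐 := 𝓑.nonMemberSubfamily (n + 1)) hk
      (hint𝓑.mono (filter_subset _ _)) h𝓑₀ hb
    have hlink := hint𝓑.memberSubfamily hk h𝓑 hsh hkr
    rw [← hcard, ← card_memberSubfamily_add_card_nonMemberSubfamily (n + 1) 𝓑]
    rcases le_or_gt r 1 with hr | hr
    · rw [Nat.sub_eq_zero_of_le hr] at h₀ h𝓑₁ ⊢
      simpa [hlink.eq_empty_of_subset_powersetCard_zero hk h𝓑₁] using h₀
    have h₁ := card_le_choose hk hlink h𝓑₁ <| by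
      rw [Nat.mul_sub_one]
      rw [Nat.mul_succ] at hkr
      omega
    have hn : 0 < n := Nat.pos_of_ne_zero fun hn => by
      rw [hn, mul_zero] at hb
      exact (Nat.mul_pos hk (by omega : 0 < r)).not_ge hb
    exact add_le_choose_of_le_choose hn hr (by rwa [Nat.sub_sub] at h₁) h₀

end KWiseIntersecting

theorem frankl_kwise_general (n r k : ℕ) (hk : 2 ≤ k)
    (hkr : k * r ≤ (k - 1) * n)
    (𝓕 : Finset (Finset ℕ))
    (h𝓕 : ∀ F ∈ 𝓕, F ⊆ Finset.Icc 1 n ∧ F.card = r)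
    (hint : KWiseIntersecting k 𝓕) :
    𝓕.card ≤ (n - 1).choose (r - 1) :=
  hint.card_le_choose (by omega) (fun F hF => mem_powersetCard.2 (h𝓕 F hF)) hkr

/-- **Frankl's theorem.** If `𝓕` is a `k`-wise intersecting family of `r`-subsets of
`{1,…,n}` and `k·r ≤ (k−1)·n`, then `|𝓕| ≤ C(n−1, r−1)`. -/
theorem frankl_kwise (n r k : ℕ) (hn : 0 < n) (hr : 0 < r) (hk : 2 ≤ k)
    (hkr : k * r ≤ (k - 1) * n)
    (𝓕 : Finset (Finset ℕ))
    (h𝓕 : ∀ F ∈ 𝓕, F ⊆ Finset.Icc 1 n ∧ F.card = r)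
    (hint : KWiseIntersecting k 𝓕) :
    𝓕.card ≤ (n - 1).choose (r - 1) :=
  frankl_kwise_general n r k hk hkr 𝓕 h𝓕 hint
end

section
/- Let k ≥ 2 and let 1 ≤ r ≤ n satisfy k·r ≤ (k−1)·2n. If 𝓕 ⊆ 𝓟^r(M_n) is k-wise intersecting, then |𝓕| ≤ 2^{r−1}·C(n−1, r−1). -/
/-- The partner of a vertex `v` in the perfect matching `Mₙ` on `{1,…,2n}`:
vertices `i` and `i+n` (for `1 ≤ i ≤ n`) are joined by an edge. -/
def partnerMn (n v : ℕ) : ℕ := if v ≤ n then v + n else v - n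

/-- `A` is an independent set of vertices of the perfect matching graph `Mₙ`. -/
def IsIndepMn (n : ℕ) (A : Finset ℕ) : Prop :=
  A ⊆ Finset.Icc 1 (2 * n) ∧ ∀ i ∈ Finset.Icc 1 n, ¬(i ∈ A ∧ i + n ∈ A)

/-- The independence number `α(Mₙ)` of the perfect matching graph `Mₙ`. -/
noncomputable def indepNumMn (n : ℕ) : ℕ := sSup {k : ℕ | ∃ A : Finset ℕ, IsIndepMn n A ∧ A.card = k}

/-- `𝓘ʳ(Mₙ)`: the family of all independent `r`-subsets of `V(Mₙ)`. -/
def famI (n r : ℕ) : Set (Finset ℕ) := {A | A.card = r ∧ IsIndepMn n A}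

/-- `𝓜ʳ(Mₙ)`: the family of all `r`-subsets of `V(Mₙ)` containing an
independent set of maximum size `α(Mₙ)`. -/
def famM (n r : ℕ) : Set (Finset ℕ) :=
  {A | A ⊆ Finset.Icc 1 (2 * n) ∧ A.card = r ∧
    ∃ B ⊆ A, IsIndepMn n B ∧ B.card = indepNumMn n}

/-- `𝓟ʳ(Mₙ) = 𝓘ʳ(Mₙ) ∪ 𝓜ʳ(Mₙ)`. -/
def famP (n r : ℕ) : Set (Finset ℕ) := famI n r ∪ famM n r

/-!
Since `α(Mₙ) = n ≥ r`, every member of `𝓟ʳ(Mₙ)` is an independent `r`-set, and a `k`-wise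
intersecting family is intersecting, so this is the Erdős–Ko–Rado theorem for signed sets,
proved by Katona's cycle method. Put the `2n` vertices on the cycle `ZMod (2n)` so that the
matching joins antipodal points `x` and `x + n`. An arc of `r ≤ n` consecutive points is
independent, and an intersecting family contains at most `r` of the `2n` arcs; the same holds
for the images of the arcs under any permutation commuting with `x ↦ x + n`. These permutations
act transitively on the `2ʳ·C(n, r)` independent `r`-sets, so averaging over them gives
`|𝓕|·2n ≤ r·2ʳ·C(n, r)`.
-/

open Finset Equiv

theorem card_mul_card_le_of_forall_card_smul_mem_le {G α ι : Type*} [Group G] [Fintype G]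
    [MulAction G α] [DecidableEq α] [Fintype ι] {X 𝓕 : Finset α} (h𝓕X : 𝓕 ⊆ X)
    (htrans : ∀ x ∈ X, ∀ y ∈ X, ∃ g : G, g • x = y) {f : ι → α}
    (hf : ∀ (g : G) i, g • f i ∈ X) {t : ℕ}
    (ht : ∀ g : G, #{i | g • f i ∈ 𝓕} ≤ t) :
    #𝓕 * Fintype.card ι ≤ t * #X := by
  rcases 𝓕.eq_empty_or_nonempty with rfl | ⟨x₀, hx₀⟩
  · simp
  -- `c x` is constant on the orbit `X`; summing it over `X` and over `𝓕` gives the bound.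
  let c : α → ℕ := fun x => #{p : G × ι | p.1 • f p.2 = x}
  have hc : ∀ x ∈ X, c x = c x₀ := by
    intro x hx
    obtain ⟨h, rfl⟩ := htrans x₀ (h𝓕X hx₀) x hx
    refine card_nbij' (fun p => (h⁻¹ * p.1, p.2)) (fun p => (h * p.1, p.2)) ?_ ?_ ?_ ?_ <;>
      intro p <;> simp [mul_smul, inv_smul_eq_iff]
  have hsumX : ∑ x ∈ X, c x = Fintype.card G * Fintype.card ι := by
    rw [← card_univ, ← card_univ, ← card_product, univ_product_univ,
      card_eq_sum_card_fiberwise (fun p _ => hf p.1 p.2)]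
  have hsum𝓕 : ∑ x ∈ 𝓕, c x ≤ Fintype.card G * t := by
    calc ∑ x ∈ 𝓕, c x = #{p : G × ι | p.1 • f p.2 ∈ 𝓕} := by
          rw [card_eq_sum_card_fiberwise (s := {p : G × ι | p.1 • f p.2 ∈ 𝓕})
            (f := fun p => p.1 • f p.2) fun p hp => by simpa using hp]
          refine sum_congr rfl fun x hx => congrArg card ?_
          ext p
          simp only [mem_filter, mem_univ, true_and, iff_and_self]
          exact fun h => h ▸ hx
      _ = ∑ g : G, #{i | g • f i ∈ 𝓕} := by
          rw [card_filter, Fintype.sum_prod_type]; simp only [card_filter]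
      _ ≤ ∑ _g : G, t := sum_le_sum fun g _ => ht g
      _ = Fintype.card G * t := by simp
  rw [sum_congr rfl hc, sum_const, smul_eq_mul] at hsumX
  rw [sum_congr rfl fun x hx => hc x (h𝓕X hx), sum_const, smul_eq_mul] at hsum𝓕
  have hG : 0 < Fintype.card G := Fintype.card_pos
  refine Nat.le_of_mul_le_mul_left ?_ hG
  calc Fintype.card G * (#𝓕 * Fintype.card ι) = #X * (#𝓕 * c x₀) := by
        rw [← mul_assoc, mul_comm _ #𝓕, mul_assoc, ← hsumX]; ring
    _ ≤ #X * (Fintype.card G * t) := Nat.mul_le_mul_left _ hsum𝓕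
    _ = Fintype.card G * (t * #X) := by ring

namespace Equiv.Perm

variable {α : Type*} (τ : Perm α)

/-- `A` is independent in the graph whose edges are the pairs `{x, τ x}`. -/
def IsIndependent (A : Finset α) : Prop := ∀ x ∈ A, τ x ∉ A

instance [DecidableEq α] : DecidablePred τ.IsIndependent := fun A =>
  inferInstanceAs (Decidable (∀ x ∈ A, τ x ∉ A))

variable {τ}

lemma IsIndependent.mono {A B : Finset α} (hB : τ.IsIndependent B) (hAB : A ⊆ B) :
    τ.IsIndependent A :=
  fun x hx hτx => hB x (hAB hx) (hAB hτx)

lemma IsIndependent.apply_ne {A : Finset α} (hA : τ.IsIndependent A) {x : α} (hx : x ∈ A) :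
    τ x ≠ x :=
  fun h => hA x hx (by rwa [h])

variable [DecidableEq α]

lemma IsIndependent.image {A : Finset α} (hA : τ.IsIndependent A) {g : Perm α}
    (hg : g ∈ Subgroup.centralizer {τ}) : τ.IsIndependent (A.image g) := by
  rw [Subgroup.mem_centralizer_singleton_iff] at hg
  intro x hx hτx
  obtain ⟨y, hy, rfl⟩ := mem_image.mp hx
  obtain ⟨z, hz, hzy⟩ := mem_image.mp hτx
  rw [← Perm.mul_apply, ← hg, Perm.mul_apply] at hzy
  exact hA y hy (g.injective hzy ▸ hz)

lemma exists_mem_centralizer_apply_eq (hτ : Function.Involutive τ) {b c : α} (hb : τ b ≠ b)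
    (hc : τ c ≠ c) : ∃ g ∈ Subgroup.centralizer {τ}, g c = b ∧
      ∀ x, x ≠ c → x ≠ τ c → x ≠ b → x ≠ τ b → g x = x := by
  have hswap : ∀ x y, τ * swap x y = swap (τ x) (τ y) * τ := fun x y => by
    rw [swap_apply_apply, inv_mul_cancel_right]
  simp only [Subgroup.mem_centralizer_singleton_iff]
  by_cases hbc : b = c
  · exact ⟨1, by rw [one_mul, mul_one], hbc.symm, fun _ _ _ _ _ => rfl⟩
  by_cases hbτc : b = τ c
  · refine ⟨swap c (τ c), ?_, by rw [swap_apply_left, hbτc], fun x h1 h2 _ _ =>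
      swap_apply_of_ne_of_ne h1 h2⟩
    rw [hswap, hτ, swap_comm]
  · have hcb : τ b ≠ c := fun h => hbτc (by rw [← h, hτ])
    have hτbc : τ c ≠ τ b := τ.injective.ne (Ne.symm hbc)
    have hdisj : (swap c b).Disjoint (swap (τ c) (τ b)) := by
      refine disjoint_swap_swap ?_
      simp only [List.nodup_cons, List.mem_cons, List.not_mem_nil, List.nodup_nil]
      grind
    refine ⟨swap c b * swap (τ c) (τ b), ?_, ?_, fun x h1 h2 h3 h4 => ?_⟩
    · calc swap c b * swap (τ c) (τ b) * τ = swap (τ c) (τ b) * swap c b * τ := by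
            rw [hdisj.commute.eq]
        _ = swap (τ c) (τ b) * (τ * swap (τ c) (τ b)) := by rw [hswap, hτ, hτ, mul_assoc]
        _ = τ * (swap c b * swap (τ c) (τ b)) := by rw [← mul_assoc, ← hswap, mul_assoc]
    · rw [Perm.mul_apply, swap_apply_of_ne_of_ne hc.symm hcb.symm, swap_apply_left]
    · rw [Perm.mul_apply, swap_apply_of_ne_of_ne h2 h4, swap_apply_of_ne_of_ne h1 h3]

theorem exists_mem_centralizer_image_eq (hτ : Function.Involutive τ) {A B : Finset α}
    (hA : τ.IsIndependent A) (hB : τ.IsIndependent B) (hAB : #A = #B) :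
    ∃ g ∈ Subgroup.centralizer {τ}, A.image g = B := by
  induction A using Finset.induction_on generalizing B with
  | empty =>
    obtain rfl : B = ∅ := by simpa [eq_comm] using hAB
    exact ⟨1, Subgroup.one_mem _, rfl⟩
  | insert a A ha ih =>
    obtain ⟨b, hb⟩ : B.Nonempty := by rw [← card_pos, ← hAB]; simp
    obtain ⟨g, hg, hgA⟩ := ih (hA.mono (subset_insert a A)) (hB.mono (erase_subset b B))
      (by rw [card_erase_of_mem hb, ← hAB, card_insert_of_notMem ha]; rfl)
    have hgτ : ∀ x, g (τ x) = τ (g x) := fun x => by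
      rw [← Perm.mul_apply, ← Perm.mul_apply, Subgroup.mem_centralizer_singleton_iff.mp hg]
    obtain ⟨h, hh, hhb, hfix⟩ := exists_mem_centralizer_apply_eq hτ (hB.apply_ne hb)
      (c := g a) (by rw [← hgτ]; exact g.injective.ne (hA.apply_ne (mem_insert_self a A)))
    have hfixB : ∀ y ∈ B.erase b, h y = y := by
      intro y hy
      have hyB := mem_of_mem_erase hy
      rw [← hgA] at hy
      obtain ⟨z, hz, rfl⟩ := mem_image.mp hy
      refine hfix (g z) (fun e => ha (g.injective e ▸ hz)) (fun e => ?_)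
        (ne_of_mem_erase (hgA ▸ hy)) (fun e => hB b hb (e ▸ hyB))
      rw [← hgτ] at e
      exact hA a (mem_insert_self a A) (mem_insert_of_mem (g.injective e ▸ hz))
    refine ⟨h * g, Subgroup.mul_mem _ hh hg, ?_⟩
    rw [image_insert, Perm.mul_apply, hhb, Perm.coe_mul, ← image_image, hgA, image_congr hfixB,
      image_id', insert_erase hb]

/-- An independent set is recovered from its trace on `H` and its projection to `H` along the
edges `{x, τ x}`. -/
lemma IsIndependent.subset_of_image_eq_of_filter_eq {H A B : Finset α}
    (hA : τ.IsIndependent A)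
    (hπ : A.image (fun x => if x ∈ H then x else τ x) =
      B.image (fun x => if x ∈ H then x else τ x))
    (hH : A.filter (· ∈ H) = B.filter (· ∈ H)) : A ⊆ B := by
  intro x hx
  by_cases hxH : x ∈ H
  · exact (mem_filter.mp (hH ▸ mem_filter.mpr ⟨hx, hxH⟩)).1
  have : τ x ∈ B.image (fun x => if x ∈ H then x else τ x) :=
    hπ ▸ mem_image.mpr ⟨x, hx, if_neg hxH⟩
  obtain ⟨y, hy, hyx⟩ := mem_image.mp this
  split_ifs at hyx with hyH
  · subst hyx
    exact absurd (mem_filter.mp (hH.symm ▸ mem_filter.mpr ⟨hy, hyH⟩)).1 (hA x hx)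
  · exact τ.injective hyx ▸ hy

theorem card_isIndependent_le [Fintype α] {H : Finset α} (hH : ∀ x, τ x ∈ H ↔ x ∉ H)
    (r : ℕ) :
    #{A : Finset α | #A = r ∧ τ.IsIndependent A} ≤ 2 ^ r * (#H).choose r := by
  let π : α → α := fun x => if x ∈ H then x else τ x
  have hπH : ∀ x, π x ∈ H := fun x => by
    by_cases hx : x ∈ H
    · simp [π, hx]
    · simpa [π, hx] using (hH x).mpr hx
  have hπinj : ∀ A, τ.IsIndependent A → Set.InjOn π A := by
    intro A hA x hx y hy hxy
    simp only [π] at hxy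
    split_ifs at hxy with hxH hyH hyH
    · exact hxy
    · exact absurd (hxy ▸ hx) (hA y hy)
    · exact absurd (hxy ▸ hy) (hA x hx)
    · exact τ.injective hxy
  calc #{A : Finset α | #A = r ∧ τ.IsIndependent A}
      ≤ #((H.powersetCard r).sigma fun S => S.powerset) := by
        refine card_le_card_of_injOn (fun A => ⟨A.image π, A.filter (· ∈ H)⟩) ?_ ?_
        · intro A hA
          obtain ⟨hAr, hA⟩ := (mem_filter.mp hA).2
          simp only [coe_sigma, Set.mem_sigma_iff, mem_coe, mem_powersetCard, mem_powerset]
          refine ⟨⟨fun y hy => ?_, ?_⟩, fun x hx => ?_⟩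
          · obtain ⟨x, -, rfl⟩ := mem_image.mp hy
            exact hπH x
          · rw [card_image_of_injOn (hπinj A hA), hAr]
          · obtain ⟨hxA, hxH⟩ := mem_filter.mp hx
            exact mem_image.mpr ⟨x, hxA, if_pos hxH⟩
        · intro A hA B hB hAB
          simp only [Sigma.mk.injEq, heq_eq_eq] at hAB
          exact ((mem_filter.mp hA).2.2.subset_of_image_eq_of_filter_eq hAB.1 hAB.2).antisymm
            ((mem_filter.mp hB).2.2.subset_of_image_eq_of_filter_eq hAB.1.symm hAB.2.symm)
    _ = 2 ^ r * (#H).choose r := by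
        rw [card_sigma, sum_congr rfl fun S hS => by
          rw [card_powerset, (mem_powersetCard.mp hS).2], sum_const, card_powersetCard,
          smul_eq_mul, mul_comm]

end Equiv.Perm

namespace ZMod

variable {m : ℕ}

lemma val_add_natCast_of_lt {x : ZMod m} {d : ℕ} (h : x.val + d < m) :
    (x + d).val = x.val + d := by
  rw [val_add_of_lt (by rwa [val_cast_of_lt (by omega)]), val_cast_of_lt (by omega)]

lemma eq_of_natCast_eq {a b : ℕ} (h : (a : ZMod m) = b) (ha : a < b + m) (hb : b < a + m) :
    a = b := by
  rw [natCast_eq_natCast_iff] at h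
  rcases le_total a b with hab | hab
  · have := Nat.eq_zero_of_dvd_of_lt ((Nat.modEq_iff_dvd' hab).mp h) (by omega)
    omega
  · have := Nat.eq_zero_of_dvd_of_lt ((Nat.modEq_iff_dvd' hab).mp h.symm) (by omega)
    omega

section Cycle

variable [NeZero m]

/-- The arc `{s, s + 1, …, s + (r - 1)}` of the cycle `ZMod m`. -/
def cyclicArc (r : ℕ) (s : ZMod m) : Finset (ZMod m) := {x | (x - s).val < r}

variable {r : ℕ}

@[simp]
lemma mem_cyclicArc {s x : ZMod m} : x ∈ cyclicArc r s ↔ (x - s).val < r := by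
  simp [cyclicArc]

lemma card_cyclicArc (hrm : r ≤ m) (s : ZMod m) : #(cyclicArc r s) = r := by
  rw [← card_range r]
  refine card_nbij' (fun x => (x - s).val) (fun a => s + a) ?_ ?_ ?_ ?_
  · intro x hx; simpa using hx
  · intro a ha
    simp only [coe_range, Set.mem_Iio] at ha
    simp [val_cast_of_lt (show a < m by omega), ha]
  · intro x _; simp
  · intro a ha
    simp only [coe_range, Set.mem_Iio] at ha
    simp [val_cast_of_lt (show a < m by omega)]

lemma disjoint_cyclicArc_add (hrm : 2 * r ≤ m) (s : ZMod m) :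
    Disjoint (cyclicArc r s) (cyclicArc r (s + (r : ZMod m))) := by
  refine disjoint_left.mpr fun x hx hx' => ?_
  rw [mem_cyclicArc] at hx hx'
  have h := val_add_natCast_of_lt (x := x - (s + (r : ZMod m))) (d := r) (by omega)
  rw [sub_add_eq_sub_sub, sub_add_cancel] at h
  omega

theorem card_le_of_not_disjoint_cyclicArc (hrm : 2 * r ≤ m) {T : Finset (ZMod m)}
    (hT : ∀ s ∈ T, ∀ t ∈ T, ¬Disjoint (cyclicArc r s) (cyclicArc r t)) : #T ≤ r := by
  rcases T.eq_empty_or_nonempty with rfl | ⟨t, ht⟩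
  · simp
  -- Starting points of arcs meeting the arc at `t` lie in `t - r < s < t + r`; fold this window
  -- onto `[0, r)`: the two points folded together start disjoint arcs.
  let u : ZMod m → ℕ := fun s => (s - t + r).val
  have hu : ∀ s ∈ T, u s < 2 * r := by
    intro s hs
    obtain ⟨x, hxs, hxt⟩ := not_disjoint_iff.mp (hT s hs t ht)
    rw [mem_cyclicArc] at hxs hxt
    have : s - t + r = (x - t) + ((r - (x - s).val : ℕ) : ZMod m) := by
      rw [Nat.cast_sub hxs.le, natCast_zmod_val]; ring
    simp only [u, this, val_add_natCast_of_lt (show (x - t).val + (r - (x - s).val) < m by omega)]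
    omega
  have hshift : ∀ s s', u s' = u s + r → s' = s + (r : ZMod m) := by
    intro s s' h
    have h' : s' - t + r = (s - t + r) + (r : ZMod m) := by
      have := val_lt (s' - t + (r : ZMod m))
      apply val_injective
      rw [val_add_natCast_of_lt (x := s - t + (r : ZMod m)) (by simp only [u] at h; omega)]
      exact h
    linear_combination h'
  let fold : ZMod m → ℕ := fun s => if u s < r then u s else u s - r
  calc #T ≤ #(range r) := by
        refine card_le_card_of_injOn fold (fun s hs => ?_) fun s hs s' hs' h => ?_
        · have := hu s hs
          simp only [fold, coe_range, Set.mem_Iio]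
          split_ifs <;> omega
        · have h1 := hu s hs; have h2 := hu s' hs'
          simp only [fold] at h
          by_cases e : u s = u s'
          · have : s - t + r = s' - t + r := val_injective m e
            simpa using this
          · exfalso
            rcases lt_or_gt_of_ne e with e | e
            · have := hshift s s' (by split_ifs at h <;> omega)
              exact hT s hs s' hs' (this ▸ disjoint_cyclicArc_add hrm s)
            · have := hshift s' s (by split_ifs at h <;> omega)
              exact hT s' hs' s hs (this ▸ disjoint_cyclicArc_add hrm s')
    _ = r := card_range r

end Cycle

variable {n : ℕ}

lemma add_natCast_add_natCast (x : ZMod (2 * n)) : x + n + n = x := by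
  rw [add_assoc, ← Nat.cast_add, ← two_mul, natCast_self, add_zero]

lemma card_image_natCast_range : #((range n).image ((↑) : ℕ → ZMod (2 * n))) = n := by
  rw [card_image_of_injOn, card_range]
  intro a ha b hb h
  simp only [coe_range, Set.mem_Iio] at ha hb
  simpa [val_cast_of_lt (show a < 2 * n by omega), val_cast_of_lt (show b < 2 * n by omega)]
    using congrArg val h

variable [NeZero n]

lemma mem_image_natCast_range_iff (x : ZMod (2 * n)) :
    x ∈ (range n).image ((↑) : ℕ → ZMod (2 * n)) ↔ x.val < n := by
  simp only [mem_image, mem_range]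
  constructor
  · rintro ⟨a, ha, rfl⟩
    rwa [val_cast_of_lt (by omega)]
  · exact fun h => ⟨x.val, h, natCast_zmod_val x⟩

lemma add_mem_image_natCast_range_iff (x : ZMod (2 * n)) :
    x + n ∈ (range n).image ((↑) : ℕ → ZMod (2 * n)) ↔
      x ∉ (range n).image ((↑) : ℕ → ZMod (2 * n)) := by
  rw [mem_image_natCast_range_iff, mem_image_natCast_range_iff]
  have hx := val_lt x
  by_cases h : x.val < n
  · rw [val_add_natCast_of_lt (by omega)]
    omega
  · have : x + n = ((x.val - n : ℕ) : ZMod (2 * n)) := by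
      rw [← add_natCast_add_natCast ((x.val - n : ℕ) : ZMod (2 * n)), ← Nat.cast_add,
        Nat.sub_add_cancel (by omega), natCast_zmod_val]
    rw [this, val_cast_of_lt (by omega)]
    omega

lemma isIndependent_cyclicArc {r : ℕ} (hrn : r ≤ n) (s : ZMod (2 * n)) :
    (Equiv.addRight (n : ZMod (2 * n))).IsIndependent (cyclicArc r s) := by
  intro x hx hxn
  rw [mem_cyclicArc] at hx hxn
  rw [coe_addRight, add_sub_right_comm, val_add_natCast_of_lt (by omega)] at hxn
  omega

end ZMod

lemma Nat.mul_two_pow_mul_choose {n r : ℕ} (hr : 1 ≤ r) :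
    r * (2 ^ r * n.choose r) = 2 * n * (2 ^ (r - 1) * (n - 1).choose (r - 1)) := by
  obtain ⟨r, rfl⟩ := Nat.exists_eq_add_one_of_ne_zero (show r ≠ 0 by omega)
  rcases n with _ | n
  · simp
  have := Nat.add_one_mul_choose_eq n r
  simp only [Nat.add_sub_cancel, pow_succ]
  linear_combination (2 * 2 ^ r) * this.symm

open Pointwise in
theorem card_mul_le_of_intersecting_of_isIndependent {n r : ℕ} [NeZero n] (hrn : r ≤ n)
    {𝓖 : Finset (Finset (ZMod (2 * n)))}
    (h𝓖 : ∀ A ∈ 𝓖, #A = r ∧ (Equiv.addRight (n : ZMod (2 * n))).IsIndependent A)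
    (hint : (𝓖 : Set (Finset (ZMod (2 * n)))).Intersecting) :
    #𝓖 * (2 * n) ≤ r * #{A : Finset (ZMod (2 * n)) |
      #A = r ∧ (Equiv.addRight (n : ZMod (2 * n))).IsIndependent A} := by
  classical
  set τ := Equiv.addRight (n : ZMod (2 * n))
  have hsmul : ∀ (g : Subgroup.centralizer {τ}) (A : Finset (ZMod (2 * n))),
      g • A = A.image (g : Perm (ZMod (2 * n))) := fun _ _ => rfl
  rw [show #𝓖 * (2 * n) = #𝓖 * Fintype.card (ZMod (2 * n)) by rw [ZMod.card]]
  refine card_mul_card_le_of_forall_card_smul_mem_le (G := Subgroup.centralizer {τ})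
    (fun A hA => by simpa using h𝓖 A hA) (fun A hA B hB => ?_) (f := ZMod.cyclicArc r)
    (fun g s => ?_) fun g => ?_
  · simp only [mem_filter, mem_univ, true_and] at hA hB
    obtain ⟨g, hg, hAB⟩ :=
      Perm.exists_mem_centralizer_image_eq (fun x => ZMod.add_natCast_add_natCast x) hA.2 hB.2
        (hA.1.trans hB.1.symm)
    exact ⟨⟨g, hg⟩, by rw [hsmul, ← hAB]⟩
  · simp only [mem_filter, mem_univ, true_and, hsmul]
    exact ⟨by rw [card_image_of_injective _ (g : Perm (ZMod (2 * n))).injective,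
      ZMod.card_cyclicArc (by omega)], (ZMod.isIndependent_cyclicArc hrn s).image g.2⟩
  · refine ZMod.card_le_of_not_disjoint_cyclicArc (by omega) fun s hs t ht => ?_
    simp only [mem_filter, mem_univ, true_and, hsmul] at hs ht
    rw [← disjoint_image (g : Perm (ZMod (2 * n))).injective]
    exact hint hs ht

theorem card_le_of_intersecting_of_isIndependent {n r : ℕ} (hr : 1 ≤ r) (hrn : r ≤ n)
    {𝓖 : Finset (Finset (ZMod (2 * n)))}
    (h𝓖 : ∀ A ∈ 𝓖, #A = r ∧ (Equiv.addRight (n : ZMod (2 * n))).IsIndependent A)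
    (hint : (𝓖 : Set (Finset (ZMod (2 * n)))).Intersecting) :
    #𝓖 ≤ 2 ^ (r - 1) * (n - 1).choose (r - 1) := by
  have : NeZero n := ⟨by omega⟩
  have hX := Perm.card_isIndependent_le (τ := Equiv.addRight (n : ZMod (2 * n)))
    (fun x => ZMod.add_mem_image_natCast_range_iff x) r
  rw [ZMod.card_image_natCast_range] at hX
  refine Nat.le_of_mul_le_mul_left ?_ (show 0 < 2 * n by omega)
  calc 2 * n * #𝓖 = #𝓖 * (2 * n) := mul_comm _ _
    _ ≤ r * (2 ^ r * n.choose r) :=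
      (card_mul_le_of_intersecting_of_isIndependent hrn h𝓖 hint).trans (Nat.mul_le_mul_left _ hX)
    _ = 2 * n * (2 ^ (r - 1) * (n - 1).choose (r - 1)) := Nat.mul_two_pow_mul_choose hr

lemma KWiseIntersecting.intersecting {k : ℕ} {𝓕 : Finset (Finset ℕ)} (hk : 2 ≤ k)
    (h : KWiseIntersecting k 𝓕) : (𝓕 : Set (Finset ℕ)).Intersecting := by
  intro A hA B hB
  obtain ⟨v, hv⟩ := h (fun i => if i.val = 0 then A else B) fun i => by split_ifs <;> assumption
  exact not_disjoint_iff.mpr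
    ⟨v, by simpa using hv ⟨0, by omega⟩, by simpa using hv ⟨1, by omega⟩⟩

lemma le_indepNumMn (n : ℕ) : n ≤ indepNumMn n := by
  refine le_csSup ⟨2 * n, ?_⟩ ⟨Icc 1 n, ⟨Icc_subset_Icc_right (by omega), ?_⟩, by simp⟩
  · rintro _ ⟨A, hA, rfl⟩
    simpa using card_le_card hA.1
  · intro i hi h
    have := mem_Icc.mp h.2
    have := mem_Icc.mp hi
    omega

lemma famP_subset_famI {n r : ℕ} (hrn : r ≤ n) : famP n r ⊆ famI n r := by
  rintro A (hA | ⟨-, hAr, B, hBA, hB, hBcard⟩)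
  · exact hA
  · have : B = A := eq_of_subset_of_card_le hBA (by have := le_indepNumMn n; omega)
    exact ⟨hAr, this ▸ hB⟩

lemma natCast_injOn_Icc (n : ℕ) : Set.InjOn ((↑) : ℕ → ZMod (2 * n)) (Icc 1 (2 * n)) := by
  intro a ha b hb h
  simp only [coe_Icc, Set.mem_Icc] at ha hb
  exact ZMod.eq_of_natCast_eq h (by omega) (by omega)

lemma isIndependent_image_natCast {n : ℕ} {A : Finset ℕ} (hA : IsIndepMn n A) :
    (Equiv.addRight (n : ZMod (2 * n))).IsIndependent (A.image (↑)) := by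
  simp only [Perm.IsIndependent, mem_image, coe_addRight]
  rintro _ ⟨u, hu, rfl⟩ ⟨v, hv, hvu⟩
  have hu' := mem_Icc.mp (hA.1 hu)
  have hv' := mem_Icc.mp (hA.1 hv)
  by_cases hun : u ≤ n
  · have : v = u + n := ZMod.eq_of_natCast_eq (by push_cast; exact hvu) (by omega) (by omega)
    exact hA.2 u (mem_Icc.mpr ⟨hu'.1, hun⟩) ⟨hu, this ▸ hv⟩
  · have hu_eq : (u : ZMod (2 * n)) = ((u - n : ℕ) : ZMod (2 * n)) + n := by
      rw [← Nat.cast_add, Nat.sub_add_cancel (by omega)]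
    have hvu' : (v : ZMod (2 * n)) = (u - n : ℕ) := by
      rw [hvu, hu_eq, ZMod.add_natCast_add_natCast]
    have : v = u - n := ZMod.eq_of_natCast_eq hvu' (by omega) (by omega)
    exact hA.2 v (mem_Icc.mpr ⟨by omega, by omega⟩)
      ⟨hv, by rwa [this, Nat.sub_add_cancel (by omega)]⟩

theorem kwise_matching_bound_small_general (n r k : ℕ) (hr : 1 ≤ r) (hrn : r ≤ n)
    (hk : 2 ≤ k)
    (𝓕 : Finset (Finset ℕ)) (h𝓕 : ↑𝓕 ⊆ famP n r)
    (hint : KWiseIntersecting k 𝓕) :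
    𝓕.card ≤ 2 ^ (r - 1) * (n - 1).choose (r - 1) := by
  have hI : ∀ A ∈ 𝓕, A ∈ famI n r := fun A hA => famP_subset_famI hrn (h𝓕 hA)
  have hinj : Set.InjOn (image ((↑) : ℕ → ZMod (2 * n))) 𝓕 := fun A hA B hB =>
    (image_eq_image_iff_of_injOn (natCast_injOn_Icc n) (hI A hA).2.1 (hI B hB).2.1).mp
  rw [← card_image_of_injOn hinj]
  refine card_le_of_intersecting_of_isIndependent hr hrn ?_ ?_
  · simp only [mem_image]
    rintro _ ⟨A, hA, rfl⟩
    exact ⟨by rw [card_image_of_injOn ((natCast_injOn_Icc n).mono (hI A hA).2.1), (hI A hA).1],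
      isIndependent_image_natCast (hI A hA).2⟩
  · simp only [coe_image]
    rintro _ ⟨A, hA, rfl⟩ _ ⟨B, hB, rfl⟩
    obtain ⟨v, hvA, hvB⟩ := not_disjoint_iff.mp (hint.intersecting hk hA hB)
    exact not_disjoint_iff.mpr ⟨v, mem_image_of_mem _ hvA, mem_image_of_mem _ hvB⟩

/-- If `k·r ≤ (k−1)·2n`, `1 ≤ r ≤ n` and `𝓕 ⊆ 𝓟ʳ(Mₙ)` is `k`-wise intersecting, then
`|𝓕| ≤ 2^(r−1)·C(n−1, r−1)`. -/
theorem kwise_matching_bound_small (n r k : ℕ) (hn : 1 ≤ n) (hr : 1 ≤ r) (hrn : r ≤ n)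
    (hk : 2 ≤ k) (hkr : k * r ≤ (k - 1) * (2 * n))
    (𝓕 : Finset (Finset ℕ)) (h𝓕 : ↑𝓕 ⊆ famP n r)
    (hint : KWiseIntersecting k 𝓕) :
    𝓕.card ≤ 2 ^ (r - 1) * (n - 1).choose (r - 1) :=
  kwise_matching_bound_small_general n r k hr hrn hk 𝓕 h𝓕 hint
end

section
/- Let 1 ≤ r ≤ n and let 𝓕 ⊆ 𝓘^r(M_n) be an intersecting family (any two members have nonempty intersection). Then |𝓕| ≤ 2^{r−1}·C(n−1, r−1). -/
/-!
Katona's cycle method, for signed sets. Place the `2n` vertices of `Mₙ` on a circle in the order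
`x₁, …, xₙ, x̄₁, …, x̄ₙ`, where `x̄ᵢ` is the partner of `xᵢ`. As `r ≤ n`, each of the `2n` arcs of
`r` consecutive vertices is an independent `r`-set, and an intersecting family contains at most
`r` of these arcs. Now move the circle by every automorphism `g` of `Mₙ` (the signed permutations).
They act transitively on the at most `C(n, r) 2^r` independent `r`-sets, so each arc is mapped
into `𝓕` by at least `|𝓕| |G| / (C(n, r) 2^r)` of them. Double counting the pairs `(g, arc)` with
`g (arc) ∈ 𝓕` gives `2n |𝓕| |G| ≤ r C(n, r) 2^r |G|`, that is `|𝓕| ≤ 2^(r-1) C(n-1, r-1)`.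
-/

open Finset MulAction Function Equiv
open scoped Pointwise

namespace BollobasLeader

lemma mod_eq_ite_of_lt_two_mul {n v : ℕ} (hv : v < 2 * n) :
    v % n = if n ≤ v then v - n else v := by
  split_ifs with h
  · rw [Nat.mod_eq_sub_mod h, Nat.mod_eq_of_lt (by omega)]
  · exact Nat.mod_eq_of_lt (by omega)

section Arcs

variable {m r : ℕ}

def arc (t : ZMod m) (r : ℕ) : Finset (ZMod m) := (range r).image fun j : ℕ => t + j

lemma natCast_inj_of_lt {a b : ℕ} (ha : a < m) (hb : b < m) (h : (a : ZMod m) = b) : a = b := by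
  simpa [ZMod.val_cast_of_lt ha, ZMod.val_cast_of_lt hb] using congrArg ZMod.val h

lemma card_arc (hrm : r ≤ m) (t : ZMod m) : #(arc t r) = r := by
  rw [arc, card_image_of_injOn, card_range]
  intro j hj j' hj' h
  simp only [coe_range, Set.mem_Iio] at hj hj'
  exact natCast_inj_of_lt (by omega) (by omega) (add_left_cancel h)

lemma exists_add_eq_add_of_nonempty_arc_inter {s t : ZMod m} (h : (arc s r ∩ arc t r).Nonempty) :
    ∃ j < r, ∃ j' < r, s + j = t + j' := by
  obtain ⟨x, hx⟩ := h
  simp only [arc, mem_inter, mem_image, mem_range] at hx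
  obtain ⟨⟨j, hj, rfl⟩, j', hj', h⟩ := hx
  exact ⟨j, hj, j', hj', h.symm⟩

lemma not_nonempty_arc_inter_arc_add (hrm : 2 * r ≤ m) (s : ZMod m) :
    ¬(arc s r ∩ arc (s + r) r).Nonempty := by
  intro h
  obtain ⟨j, hj, j', hj', h⟩ := exists_add_eq_add_of_nonempty_arc_inter h
  rw [add_assoc, add_left_cancel_iff, ← Nat.cast_add] at h
  have := natCast_inj_of_lt (by omega) (by omega) h
  omega

lemma val_sub_lt_or_val_sub_add_lt (hrm : 2 * r ≤ m) {j j' : ℕ} (hj : j < r) (hj' : j' < r) :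
    ((j : ZMod m) - j').val < r ∨ ((j : ZMod m) - j' + r).val < r := by
  rcases le_or_gt j' j with h | h
  · left
    rw [← Nat.cast_sub h, ZMod.val_cast_of_lt (by omega)]
    omega
  · right
    have hcast : (j : ZMod m) - j' + r = ((j + r - j' : ℕ) : ZMod m) := by
      push_cast [Nat.cast_sub (by omega : j' ≤ j + r)]
      ring
    rw [hcast, ZMod.val_cast_of_lt (by omega)]
    omega

theorem card_le_of_arcs_intersect [NeZero m] (hrm : 2 * r ≤ m) (T : Finset (ZMod m))
    (hT : ∀ s ∈ T, ∀ t ∈ T, (arc s r ∩ arc t r).Nonempty) : #T ≤ r := by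
  obtain rfl | ⟨t₀, ht₀⟩ := T.eq_empty_or_nonempty
  · simp
  have hgap : ∀ t ∈ T, t + r ∉ T := fun t ht ht' =>
    not_nonempty_arc_inter_arc_add hrm t (hT t ht _ ht')
  -- Relative to `t₀`, a member of `T` sits at offset `d` or `d - r` for some `d < r`; `key`
  -- recovers `d`, and `hgap` forbids both offsets for the same `d`.
  let key : ZMod m → ZMod m := fun t => if (t - t₀).val < r then t - t₀ else t - t₀ + r
  have hkey : ∀ t ∈ T, (key t).val < r := by
    intro t ht
    obtain ⟨j, hj, j', hj', h⟩ := exists_add_eq_add_of_nonempty_arc_inter (hT t ht t₀ ht₀)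
    have hsub : t - t₀ = j' - j := by linear_combination h
    simp only [key]
    split_ifs with hlt
    · exact hlt
    · rw [hsub] at hlt ⊢
      exact (val_sub_lt_or_val_sub_add_lt hrm hj' hj).resolve_left hlt
  calc #T ≤ #((range r).image (Nat.cast : ℕ → ZMod m)) := by
        refine card_le_card_of_injOn key (fun t ht => ?_) (fun t ht t' ht' h => ?_)
        · exact mem_image.2 ⟨_, mem_range.2 (hkey t ht), ZMod.natCast_zmod_val _⟩
        · simp only [key] at h
          split_ifs at h
          · simpa using h
          · exact (hgap t' ht' (by rwa [show t' + r = t by linear_combination -h])).elim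
          · exact (hgap t ht (by rwa [show t + r = t' by linear_combination h])).elim
          · simpa using h
    _ ≤ r := card_image_le.trans (card_range r).le

theorem card_filter_image_arc_mem_le [NeZero m] {β : Type*} [DecidableEq β] (hrm : 2 * r ≤ m)
    {c : ZMod m → β} (hc : Injective c) {F : Finset (Finset β)}
    (hF : (F : Set (Finset β)).Intersecting) : #{t | (arc t r).image c ∈ F} ≤ r := by
  refine card_le_of_arcs_intersect hrm _ fun s hs t ht => ?_
  obtain ⟨x, hx⟩ :=
    not_disjoint_iff_nonempty_inter.1 (hF (mem_filter.1 hs).2 (mem_filter.1 ht).2)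
  simp only [mem_inter, mem_image] at hx
  obtain ⟨⟨a, ha, rfl⟩, b, hb, hba⟩ := hx
  exact ⟨a, mem_inter.2 ⟨ha, hc hba ▸ hb⟩⟩

end Arcs

section GroupAction

variable {G X : Type*} [Group G] [Fintype G] [MulAction G X] [DecidableEq X]

lemma card_filter_smul_eq_of_mem_orbit {x y : X} (hy : y ∈ orbit G x) :
    #{g : G | g • x = y} = #{g : G | g • x = x} := by
  obtain ⟨h, rfl⟩ := hy
  refine card_nbij' (h⁻¹ * ·) (h * ·) ?_ ?_ ?_ ?_ <;> intro g hg <;>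
    simp_all [mul_smul]

lemma card_filter_smul_eq_self_mul_ncard_orbit (x : X) :
    #{g : G | g • x = x} * (orbit G x).ncard = Fintype.card G := by
  rw [← index_stabilizer, ← Nat.card_eq_fintype_card, ← (stabilizer G x).card_mul_index,
    Nat.card_eq_fintype_card, Fintype.card_subtype]
  simp [mem_stabilizer_iff]

theorem card_filter_smul_mem_mul_ncard_orbit (x : X) {F : Finset X} (hF : ↑F ⊆ orbit G x) :
    #{g : G | g • x ∈ F} * (orbit G x).ncard = #F * Fintype.card G := by
  have hfib := card_eq_sum_card_fiberwise (s := {g : G | g • x ∈ F}) (t := F) (f := (· • x))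
    fun g hg => (mem_filter.1 hg).2
  rw [hfib, sum_congr rfl fun y hy => ?_, sum_const, smul_eq_mul, mul_assoc,
    card_filter_smul_eq_self_mul_ncard_orbit]
  rw [filter_filter, ← card_filter_smul_eq_of_mem_orbit (hF hy)]
  congr 1
  ext g
  simp only [mem_filter, mem_univ, true_and, and_iff_right_iff_imp]
  rintro rfl
  exact hy

end GroupAction

section SignedSets

variable {α : Type*}

/-- `α × Bool` carries the perfect matching joining `(a, false)` and `(a, true)`. -/
def antipode : Perm (α × Bool) := prodCongr (Equiv.refl α) boolNot

@[simp] lemma antipode_apply (v : α × Bool) : antipode v = (v.1, !v.2) := rfl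

variable (α) in
def signedPerms : Subgroup (Perm (α × Bool)) := Subgroup.centralizer {antipode}

lemma mem_signedPerms {g : Perm (α × Bool)} :
    g ∈ signedPerms α ↔ ∀ v, g (antipode v) = antipode (g v) := by
  simp [signedPerms, Subgroup.mem_centralizer_singleton_iff, Perm.ext_iff]

lemma prodCongr_refl_mem_signedPerms (π : Perm α) :
    prodCongr π (Equiv.refl Bool) ∈ signedPerms α :=
  mem_signedPerms.2 fun _ => rfl

def IsIndep (A : Finset (α × Bool)) : Prop := ∀ v ∈ A, antipode v ∉ A

lemma IsIndep.injOn_fst {A : Finset (α × Bool)} (hA : IsIndep A) :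
    Set.InjOn Prod.fst (A : Set (α × Bool)) := by
  rintro ⟨a, b⟩ hv ⟨a', b'⟩ hv' (rfl : a = a')
  obtain rfl | rfl := b.eq_or_eq_not b'
  · rfl
  · exact (hA _ hv' hv).elim

variable [DecidableEq α]

instance : DecidablePred (IsIndep : Finset (α × Bool) → Prop) :=
  fun A => inferInstanceAs (Decidable (∀ v ∈ A, antipode v ∉ A))

lemma IsIndep.smul {g : Perm (α × Bool)} (hg : g ∈ signedPerms α) {A : Finset (α × Bool)}
    (hA : IsIndep A) : IsIndep (g • A) := by
  simp only [IsIndep, mem_smul_finset, Perm.smul_def, forall_exists_index, and_imp,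
    forall_apply_eq_imp_iff₂]
  rintro v hv ⟨w, hw, hgw⟩
  rw [← mem_signedPerms.1 hg, g.injective.eq_iff] at hgw
  exact hA v hv (hgw ▸ hw)

def signFlip (T : Finset α) : Perm (α × Bool) :=
  Involutive.toPerm (fun v => (v.1, xor v.2 (decide (v.1 ∈ T)))) fun v => by simp

@[simp] lemma signFlip_apply (T : Finset α) (v : α × Bool) :
    signFlip T v = (v.1, xor v.2 (decide (v.1 ∈ T))) := rfl

lemma signFlip_inv (T : Finset α) : (signFlip T)⁻¹ = signFlip T := rfl

lemma signFlip_mem_signedPerms (T : Finset α) : signFlip T ∈ signedPerms α :=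
  mem_signedPerms.2 fun v => by simp

lemma IsIndep.signFlip_smul_prod_false {A : Finset (α × Bool)} (hA : IsIndep A) :
    signFlip ((A.filter (·.2)).image Prod.fst) • (A.image Prod.fst ×ˢ {false}) = A := by
  have hT : ∀ a, a ∈ (A.filter (·.2)).image Prod.fst ↔ (a, true) ∈ A := by simp
  ext ⟨a, b⟩
  rw [← inv_smul_mem_iff, signFlip_inv, Perm.smul_def, signFlip_apply]
  simp only [mem_product, hT, mem_image, mem_singleton]
  cases b
  · simp only [Bool.false_xor, decide_eq_false_iff_not, Prod.exists, exists_and_right,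
      exists_eq_right]
    constructor
    · rintro ⟨⟨b, hb⟩, hnot⟩
      cases b
      · exact hb
      · exact absurd hb hnot
    · exact fun h => ⟨⟨false, h⟩, fun h' => hA _ h h'⟩
  · simp only [Bool.true_xor, Bool.not_eq_false', decide_eq_true_eq, and_iff_right_iff_imp]
    exact fun h => ⟨_, h, rfl⟩

lemma prodCongr_refl_smul_prod (π : Perm α) (S : Finset α) (t : Finset Bool) :
    prodCongr π (Equiv.refl Bool) • (S ×ˢ t) = (π • S) ×ˢ t := by
  ext ⟨a, b⟩
  simp only [mem_smul_finset, mem_product, Perm.smul_def, prodCongr_apply, Prod.map,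
    Prod.mk.injEq, Prod.exists, coe_refl, id_eq, exists_eq_right_right]
  aesop

theorem IsIndep.exists_smul_eq {A B : Finset (α × Bool)} (hA : IsIndep A) (hB : IsIndep B)
    (hAB : #A = #B) : ∃ g ∈ signedPerms α, g • A = B := by
  have hS : #(A.image Prod.fst) = #(B.image Prod.fst) := by
    rw [card_image_of_injOn hA.injOn_fst, card_image_of_injOn hB.injOn_fst, hAB]
  obtain ⟨π, hπ⟩ := Set.powersetCard.isPretransitive.exists_smul_eq
    (⟨A.image Prod.fst, Set.powersetCard.mem_iff.2 rfl⟩ : Set.powersetCard α _)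
    ⟨B.image Prod.fst, Set.powersetCard.mem_iff.2 hS.symm⟩
  have hπ' : π • A.image Prod.fst = B.image Prod.fst := congrArg Subtype.val hπ
  set TA := (A.filter (·.2)).image Prod.fst
  set TB := (B.filter (·.2)).image Prod.fst
  refine ⟨signFlip TB * prodCongr π (Equiv.refl Bool) * (signFlip TA)⁻¹,
    mul_mem (mul_mem (signFlip_mem_signedPerms TB) (prodCongr_refl_mem_signedPerms π))
      (inv_mem (signFlip_mem_signedPerms TA)), ?_⟩
  rw [mul_smul, mul_smul, inv_smul_eq_iff.2 hA.signFlip_smul_prod_false.symm,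
    prodCongr_refl_smul_prod, hπ', hB.signFlip_smul_prod_false]

def indepSets [Fintype α] (r : ℕ) : Finset (Finset (α × Bool)) := {A | IsIndep A ∧ #A = r}

theorem card_indepSets_le [Fintype α] (r : ℕ) :
    #(indepSets (α := α) r) ≤ (Fintype.card α).choose r * 2 ^ r := by
  have hsub : indepSets (α := α) r ⊆ (powersetCard r univ).biUnion
      fun S => S.powerset.image fun T => signFlip T • (S ×ˢ {false}) := by
    intro A hA
    obtain ⟨hA, hcard⟩ := (mem_filter.1 hA).2
    refine mem_biUnion.2
      ⟨A.image Prod.fst, ?_, mem_image.2 ⟨_, ?_, hA.signFlip_smul_prod_false⟩⟩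
    · rw [mem_powersetCard, card_image_of_injOn hA.injOn_fst, hcard]
      exact ⟨subset_univ _, rfl⟩
    · exact mem_powerset.2 (image_subset_image (filter_subset _ _))
  calc #(indepSets r)
    _ ≤ ∑ S ∈ powersetCard r univ, #(S.powerset.image fun T => signFlip T • (S ×ˢ {false})) :=
        (card_le_card hsub).trans card_biUnion_le
    _ ≤ ∑ S ∈ powersetCard r (univ : Finset α), 2 ^ r := sum_le_sum fun S hS => by
        rw [← (mem_powersetCard.1 hS).2, ← card_powerset]; exact card_image_le
    _ = (Fintype.card α).choose r * 2 ^ r := by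
        rw [sum_const, card_powersetCard, card_univ, smul_eq_mul]

end SignedSets

section Circle

variable {n : ℕ} [NeZero n]

/-- Position `q` on the circle `x₁, …, xₙ, x̄₁, …, x̄ₙ`. -/
def circleVertex (q : ZMod (2 * n)) : Fin n × Bool :=
  (⟨q.val % n, Nat.mod_lt _ (NeZero.pos n)⟩, decide (n ≤ q.val))

lemma circleVertex_injective : Injective (circleVertex (n := n)) := by
  intro q q' h
  simp only [circleVertex, Prod.mk.injEq, Fin.ext_iff, decide_eq_decide] at h
  have hq := q.val_lt
  have hq' := q'.val_lt
  rw [mod_eq_ite_of_lt_two_mul hq, mod_eq_ite_of_lt_two_mul hq'] at h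
  apply ZMod.val_injective
  split_ifs at h <;> omega

lemma circleVertex_add_n (q : ZMod (2 * n)) :
    circleVertex (q + (n : ZMod (2 * n))) = antipode (circleVertex q) := by
  have hq := q.val_lt
  have hn : (n : ZMod (2 * n)).val = n := ZMod.val_cast_of_lt (by have := NeZero.pos n; omega)
  have hmod : (q.val + n) % (2 * n) = if n ≤ q.val then q.val - n else q.val + n := by
    split_ifs with h
    · rw [Nat.mod_eq_sub_mod (by omega), Nat.mod_eq_of_lt (by omega)]; omega
    · exact Nat.mod_eq_of_lt (by omega)
  simp only [circleVertex, antipode_apply, ZMod.val_add, hn, hmod, Prod.mk.injEq, Fin.ext_iff]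
  by_cases h : n ≤ q.val
  · simp [h, mod_eq_ite_of_lt_two_mul hq, Nat.mod_eq_of_lt (show q.val - n < n by omega)]
    omega
  · simp [h]

def window (r : ℕ) (t : ZMod (2 * n)) : Finset (Fin n × Bool) := (arc t r).image circleVertex

lemma card_window {r : ℕ} (hrn : r ≤ n) (t : ZMod (2 * n)) : #(window r t) = r := by
  rw [window, card_image_of_injective _ circleVertex_injective, card_arc (by omega)]

lemma isIndep_window {r : ℕ} (hrn : r ≤ n) (t : ZMod (2 * n)) : IsIndep (window r t) := by
  intro v hv hv'
  simp only [window, arc, image_image, mem_image, mem_range, comp_apply] at hv hv'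
  obtain ⟨j, hj, rfl⟩ := hv
  obtain ⟨j', hj', h⟩ := hv'
  rw [← circleVertex_add_n, circleVertex_injective.eq_iff, add_assoc, add_left_cancel_iff,
    ← Nat.cast_add] at h
  have := natCast_inj_of_lt (by omega) (by omega) h
  omega

theorem two_mul_card_le_of_intersecting {r : ℕ} (hrn : r ≤ n)
    {F : Finset (Finset (Fin n × Bool))} (hF : ∀ A ∈ F, IsIndep A ∧ #A = r)
    (hint : (F : Set (Finset (Fin n × Bool))).Intersecting) :
    2 * n * #F ≤ r * (n.choose r * 2 ^ r) := by
  classical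
  let G := signedPerms (Fin n)
  set K := n.choose r * 2 ^ r
  have horbit : ∀ t, #F * Fintype.card G ≤ #{g : G | g • window r t ∈ F} * K := by
    intro t
    have hFo : ↑F ⊆ orbit G (window r t) := fun A hA => by
      obtain ⟨g, hg, hgA⟩ := (isIndep_window hrn t).exists_smul_eq (hF A hA).1
        ((card_window hrn t).trans (hF A hA).2.symm)
      exact ⟨⟨g, hg⟩, hgA⟩
    have hOI : orbit G (window r t) ⊆ indepSets (α := Fin n) r := by
      rintro _ ⟨g, rfl⟩
      simp only [indepSets, coe_filter, mem_univ, true_and, Set.mem_ofPred_eq]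
      exact ⟨(isIndep_window hrn t).smul g.2, (card_smul_finset _ _).trans (card_window hrn t)⟩
    rw [← card_filter_smul_mem_mul_ncard_orbit _ hFo]
    gcongr
    calc (orbit G (window r t)).ncard ≤ (indepSets (α := Fin n) r : Set _).ncard :=
          Set.ncard_le_ncard hOI (finite_toSet _)
      _ ≤ K := by rw [Set.ncard_coe_finset]; simpa using card_indepSets_le (α := Fin n) r
  have hkatona : ∀ g : G, #{t | g • window r t ∈ F} ≤ r := fun g => by
    have := card_filter_image_arc_mem_le (r := r) (by omega)
      ((g : Perm (Fin n × Bool)).injective.comp circleVertex_injective) hint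
    simpa [window, smul_finset_def, image_image, Subgroup.smul_def] using this
  have hcount : 2 * n * #F * Fintype.card G ≤ r * K * Fintype.card G := calc
    2 * n * #F * Fintype.card G = ∑ _t : ZMod (2 * n), #F * Fintype.card G := by
        simp [ZMod.card]; ring
    _ ≤ ∑ t, #{g : G | g • window r t ∈ F} * K := sum_le_sum fun t _ => horbit t
    _ = (∑ g : G, #{t | g • window r t ∈ F}) * K := by
        rw [← sum_mul]; simp only [card_filter]; rw [sum_comm]
    _ ≤ (∑ _g : G, r) * K := by gcongr with g; exact hkatona g
    _ = r * K * Fintype.card G := by simp; ring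
  exact Nat.le_of_mul_le_mul_right hcount Fintype.card_pos

end Circle

lemma le_two_pow_mul_choose_of_two_mul_le {n r x : ℕ} (hn : 0 < n)
    (h : 2 * n * x ≤ r * (n.choose r * 2 ^ r)) :
    x ≤ 2 ^ (r - 1) * (n - 1).choose (r - 1) := by
  obtain ⟨n, rfl⟩ := Nat.exists_eq_add_one_of_ne_zero hn.ne'
  cases r with
  | zero => simp at h; omega
  | succ r =>
    refine Nat.le_of_mul_le_mul_left (c := 2 * (n + 1)) ?_ (by omega)
    calc 2 * (n + 1) * x ≤ (n + 1).choose (r + 1) * (r + 1) * 2 ^ r * 2 := by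
          rw [pow_succ] at h; linarith
      _ = 2 * (n + 1) * (2 ^ r * n.choose r) := by rw [← Nat.add_one_mul_choose_eq]; ring
      _ = 2 * (n + 1) * (2 ^ (r + 1 - 1) * (n + 1 - 1).choose (r + 1 - 1)) := by simp

section Transfer

variable {n : ℕ} [NeZero n]

/-- Vertex `i ∈ [1, n]` of `Mₙ` becomes `(i - 1, false)` and its partner `i + n` becomes
`(i - 1, true)`. -/
def toVertex (v : ℕ) : Fin n × Bool :=
  (⟨(v - 1) % n, Nat.mod_lt _ (NeZero.pos n)⟩, decide (n < v))

lemma toVertex_fst_val {v : ℕ} (hv : v ∈ Icc 1 (2 * n)) :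
    ((toVertex (n := n) v).1 : ℕ) = if n < v then v - 1 - n else v - 1 := by
  rw [mem_Icc] at hv
  simp only [toVertex, mod_eq_ite_of_lt_two_mul (show v - 1 < 2 * n by omega)]
  split_ifs <;> omega

lemma injOn_toVertex : Set.InjOn (toVertex (n := n)) (Icc 1 (2 * n) : Set ℕ) := by
  intro v hv w hw h
  have hfst := congrArg (fun x => ((Prod.fst x : Fin n) : ℕ)) h
  have hsnd := congrArg Prod.snd h
  simp only [toVertex_fst_val hv, toVertex_fst_val hw] at hfst
  simp only [toVertex, decide_eq_decide] at hsnd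
  rw [coe_Icc, Set.mem_Icc] at hv hw
  split_ifs at hfst <;> omega

lemma isIndep_image_toVertex {A : Finset ℕ} (hA : IsIndepMn n A) :
    IsIndep (A.image (toVertex (n := n))) := by
  intro v hv hv'
  obtain ⟨x, hx, rfl⟩ := mem_image.1 hv
  obtain ⟨y, hy, hyx⟩ := mem_image.1 hv'
  have hfst := congrArg (fun x => ((Prod.fst x : Fin n) : ℕ)) hyx
  have hsnd := congrArg Prod.snd hyx
  simp only [antipode_apply, toVertex_fst_val (hA.1 hx), toVertex_fst_val (hA.1 hy)] at hfst
  simp only [antipode_apply, toVertex] at hsnd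
  have hx' := mem_Icc.1 (hA.1 hx)
  have hy' := mem_Icc.1 (hA.1 hy)
  by_cases hnx : n < x
  · have hny : ¬n < y := by simpa [hnx] using hsnd
    rw [if_pos hnx, if_neg hny] at hfst
    exact hA.2 y (mem_Icc.2 ⟨hy'.1, by omega⟩) ⟨hy, by rwa [show y + n = x by omega]⟩
  · have hny : n < y := by simpa [hnx] using hsnd
    rw [if_neg hnx, if_pos hny] at hfst
    exact hA.2 x (mem_Icc.2 ⟨hx'.1, by omega⟩) ⟨hx, by rwa [show x + n = y by omega]⟩

lemma injOn_image_toVertex :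
    Set.InjOn (·.image (toVertex (n := n))) {A : Finset ℕ | A ⊆ Icc 1 (2 * n)} :=
  (image_injOn_powerset_of_injOn injOn_toVertex).mono fun _ hA => mem_powerset.2 hA

lemma image_toVertex_of_mem_famI {r : ℕ} {A : Finset ℕ} (hA : A ∈ famI n r) :
    IsIndep (A.image (toVertex (n := n))) ∧ #(A.image (toVertex (n := n))) = r :=
  ⟨isIndep_image_toVertex hA.2, (card_image_of_injOn (injOn_toVertex.mono hA.2.1)).trans hA.1⟩

end Transfer

end BollobasLeader

open BollobasLeader

theorem bollobas_leader_bound_general (n r : ℕ) (hn : 1 ≤ n) (hrn : r ≤ n)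
    (𝓕 : Finset (Finset ℕ)) (h𝓕 : ↑𝓕 ⊆ famI n r)
    (hint : ∀ A ∈ 𝓕, ∀ B ∈ 𝓕, ∃ v, v ∈ A ∧ v ∈ B) :
    𝓕.card ≤ 2 ^ (r - 1) * (n - 1).choose (r - 1) := by
  have : NeZero n := ⟨by omega⟩
  rw [← card_image_of_injOn (injOn_image_toVertex.mono fun A hA => (h𝓕 hA).2.1)]
  refine le_two_pow_mul_choose_of_two_mul_le hn (two_mul_card_le_of_intersecting hrn ?_ ?_)
  · simp only [mem_image, forall_exists_index, and_imp, forall_apply_eq_imp_iff₂]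
    exact fun A hA => image_toVertex_of_mem_famI (h𝓕 hA)
  · simp only [Set.Intersecting, coe_image, Set.mem_image, mem_coe, forall_exists_index, and_imp,
      forall_apply_eq_imp_iff₂]
    intro A hA B hB
    obtain ⟨v, hvA, hvB⟩ := hint A hA B hB
    exact not_disjoint_iff.2 ⟨toVertex v, mem_image_of_mem _ hvA, mem_image_of_mem _ hvB⟩

/-- **Bollobás–Leader theorem (bound).** An intersecting family of independent
`r`-subsets of `Mₙ` (`1 ≤ r ≤ n`) has size at most `2^(r−1)·C(n−1, r−1)`. -/
theorem bollobas_leader_bound (n r : ℕ) (hn : 1 ≤ n) (hr : 1 ≤ r) (hrn : r ≤ n)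
    (𝓕 : Finset (Finset ℕ)) (h𝓕 : ↑𝓕 ⊆ famI n r)
    (hint : ∀ A ∈ 𝓕, ∀ B ∈ 𝓕, ∃ v, v ∈ A ∧ v ∈ B) :
    𝓕.card ≤ 2 ^ (r - 1) * (n - 1).choose (r - 1) :=
  bollobas_leader_bound_general n r hn hrn 𝓕 h𝓕 hint
end

section
/- Let k ≥ 2 and let n, r be positive integers with k·r ≤ (k−1)·n. Let σ be a cyclic order on {1,…,n} and let 𝓕 be a k-wise intersecting family of sets each of which is a σ-interval of length r. Then |𝓕| ≤ r. -/
/-- The `σ`-interval of length `r` beginning at index `x ∈ ℤ/nℤ`: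
`{σ(x), σ(x+1), …, σ(x+r−1)}`. -/
def cInterval (n : ℕ) (σ : ZMod n → ℕ) (r : ℕ) (x : ZMod n) : Finset ℕ :=
  (Finset.range r).image fun j : ℕ => σ (x + (j : ZMod n))

open Finset in
/-- Auxiliary core lemma. -/
theorem core_bound (n r k l : ℕ) (hn2 : 2 ≤ n) (hr : 1 ≤ r) (hrn : r < n) (hl : l = n - r)
    (hk : 2 ≤ k) (hkl : n ≤ k * l) (S : Finset (ZMod n))
    (H : ∀ f : Fin k → ZMod n, (∀ i, f i ∈ S) → ∃ z : ZMod n, ∀ i, (z - f i).val < r) :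
    S.card ≤ r := by
  classical
  haveI : NeZero n := ⟨by omega⟩
  by_contra hm'
  push_neg at hm'
  have hl1 : 1 ≤ l := by omega
  have hln : l < n := by omega
  have hrl : r + l = n := by omega
  have hnm : n - S.card ≤ l - 1 := by
    have : S.card ≤ n := by
      simpa [ZMod.card n] using Finset.card_le_univ S
    omega
  -- window lemma: every half-open window of length l contains a point of S
  have win : ∀ x : ZMod n, ∃ t ∈ S, 1 ≤ (t - x).val ∧ (t - x).val ≤ l := by
    intro x
    by_contra hcon
    push_neg at hcon
    have hinj : Set.InjOn (fun t : ZMod n => (t - x).val) S := by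
      intro a _ b _ hab
      have h1 : a - x = b - x := ZMod.val_injective n hab
      have := congrArg (· + x) h1
      simpa using this
    have himage : S.image (fun t : ZMod n => (t - x).val) ⊆ insert 0 (Finset.Ico (l+1) n) := by
      intro v hv
      simp only [mem_image] at hv
      obtain ⟨t, ht, rfl⟩ := hv
      rcases Nat.lt_or_ge (t - x).val 1 with h | h
      · simp [show (t - x).val = 0 by omega]
      · have := hcon t ht h
        have hvlt : (t - x).val < n := ZMod.val_lt _
        simp only [mem_insert, Finset.mem_Ico]
        right; omega
    have hcard : S.card ≤ r := by
      calc S.card = (S.image (fun t : ZMod n => (t - x).val)).card :=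
            (Finset.card_image_of_injOn hinj).symm
        _ ≤ (insert 0 (Finset.Ico (l+1) n)).card := Finset.card_le_card himage
        _ ≤ (Finset.Ico (l+1) n).card + 1 := Finset.card_insert_le _ _
        _ = (n - (l+1)) + 1 := by rw [Nat.card_Ico]
        _ ≤ r := by omega
    omega
  -- greedy maximal step
  have hWne : ∀ x : ZMod n,
      ((S.filter (fun t => 1 ≤ (t - x).val ∧ (t - x).val ≤ l)).image
        (fun t => (t - x).val)).Nonempty := by
    intro x
    obtain ⟨t, ht, h1, h2⟩ := win x
    exact ⟨(t - x).val, mem_image.2 ⟨t, mem_filter.2 ⟨ht, h1, h2⟩, rfl⟩⟩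
  set inc : ZMod n → ℕ := fun x =>
    (((S.filter (fun t => 1 ≤ (t - x).val ∧ (t - x).val ≤ l)).image
        (fun t => (t - x).val)).max' (hWne x)) with hinc_def
  have hinc_spec : ∀ x : ZMod n, ∃ t ∈ S, (t - x).val = inc x := by
    intro x
    have h := Finset.max'_mem _ (hWne x)
    rw [Finset.mem_image] at h
    obtain ⟨t, ht, hval⟩ := h
    rw [Finset.mem_filter] at ht
    exact ⟨t, ht.1, hval⟩
  have hinc1 : ∀ x : ZMod n, 1 ≤ inc x ∧ inc x ≤ l := by
    intro x
    obtain ⟨t, ht, hval⟩ := hinc_spec x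
    have h := Finset.max'_mem _ (hWne x)
    rw [Finset.mem_image] at h
    obtain ⟨t', ht', hval'⟩ := h
    rw [Finset.mem_filter] at ht'
    rw [show (((S.filter (fun t => 1 ≤ (t - x).val ∧ (t - x).val ≤ l)).image
        (fun t => (t - x).val)).max' (hWne x)) = inc x from rfl] at hval'
    omega
  have hinc_max : ∀ x : ZMod n, ∀ t ∈ S, 1 ≤ (t - x).val → (t - x).val ≤ l →
      (t - x).val ≤ inc x := by
    intro x t ht h1 h2
    apply Finset.le_max'
    exact mem_image.2 ⟨t, mem_filter.2 ⟨ht, h1, h2⟩, rfl⟩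
  set F : ZMod n → ZMod n := fun x => x + ((inc x : ℕ) : ZMod n) with hF_def
  have hF_val : ∀ x : ZMod n, (F x - x).val = inc x := by
    intro x
    have : F x - x = ((inc x : ℕ) : ZMod n) := by simp [hF_def]
    rw [this, ZMod.val_cast_of_lt (by have := (hinc1 x).2; omega)]
  have hFS : ∀ x : ZMod n, F x ∈ S := by
    intro x
    obtain ⟨t, ht, hval⟩ := hinc_spec x
    have : F x = t := by
      have h1 : ((inc x : ℕ) : ZMod n) = t - x := by
        rw [← hval, ZMod.natCast_zmod_val]
      simp [hF_def, h1]
    rw [this]; exact ht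
  -- successor gap function
  have hdex : ∀ x : ZMod n, ∃ v : ℕ, 1 ≤ v ∧ x + (v : ZMod n) ∈ S := by
    intro x
    obtain ⟨t, ht, h1, h2⟩ := win x
    refine ⟨(t - x).val, h1, ?_⟩
    rw [ZMod.natCast_zmod_val]
    simpa using ht
  set d : ZMod n → ℕ := fun x => Nat.find (hdex x) with hd_def
  have hd1 : ∀ x, 1 ≤ d x := fun x => (Nat.find_spec (hdex x)).1
  have hdS : ∀ x, x + ((d x : ℕ) : ZMod n) ∈ S := fun x => (Nat.find_spec (hdex x)).2
  have hdmin : ∀ x u, 1 ≤ u → u < d x → x + ((u : ℕ) : ZMod n) ∉ S := by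
    intro x u h1 h2 hmem
    exact Nat.find_min (hdex x) h2 ⟨h1, hmem⟩
  have hdle : ∀ x, d x ≤ l := by
    intro x
    obtain ⟨t, ht, h1, h2⟩ := win x
    have : d x ≤ (t - x).val := by
      apply Nat.find_min'
      refine ⟨h1, ?_⟩
      rw [ZMod.natCast_zmod_val]
      simpa using ht
    omega
  -- key maximality inequality
  have key1 : ∀ x : ZMod n, l + 1 ≤ inc x + d (F x) := by
    intro x
    by_contra hcon
    push_neg at hcon
    set t := F x + ((d (F x) : ℕ) : ZMod n) with ht_def
    have htS : t ∈ S := hdS (F x)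
    have htx : (t - x).val = inc x + d (F x) := by
      have : t - x = ((inc x + d (F x) : ℕ) : ZMod n) := by
        push_cast
        rw [ht_def, hF_def]
        ring
      rw [this, ZMod.val_cast_of_lt (by omega)]
    have h4 := hinc1 x
    have h6 := hd1 (F x)
    have h5 := hinc_max x t htS (by omega) (by omega)
    omega
  have hF_sub : ∀ y : ZMod n, F y - y = ((inc y : ℕ) : ZMod n) := by
    intro y; simp [hF_def]
  have hiterS : ∀ (m : ℕ) (x : ZMod n), x ∈ S → F^[m] x ∈ S := by
    intro m
    induction m with
    | zero => intro x hx; simpa using hx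
    | succ p ih =>
        intro x hx
        rw [Function.iterate_succ_apply']
        exact hFS _
  -- key2 : no k consecutive greedy steps stay within a window of length < n
  have key2 : ∀ s ∈ S, (∑ i ∈ Finset.range k, inc (F^[i] s)) ≤ n - 1 := by
    intro s hs
    by_contra hcon
    push_neg at hcon
    set A : ℕ → ℕ := fun t => ∑ i ∈ Finset.range t, inc (F^[i] s) with hA_def
    have hA0 : A 0 = 0 := by simp [hA_def]
    have hAsucc : ∀ t, A (t+1) = A t + inc (F^[t] s) := fun t => Finset.sum_range_succ _ t
    have hAmono : ∀ a b, a ≤ b → A a ≤ A b := by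
      intro a b hab
      exact Finset.sum_le_sum_of_subset (Finset.range_subset_range.2 hab)
    have hAk : n ≤ A k := by
      have hrfl : A k = ∑ i ∈ Finset.range k, inc (F^[i] s) := rfl
      omega
    have hex : ∃ t, r ≤ A t := ⟨k, by omega⟩
    set t := Nat.find hex with ht_def
    have htr : r ≤ A t := Nat.find_spec hex
    have htmin : ∀ u, u < t → A u < r := by
      intro u hu
      have := Nat.find_min hex hu
      omega
    have ht1 : 1 ≤ t := by
      rcases Nat.eq_zero_or_pos t with h | h
      · rw [h] at htr; omega
      · exact h
    have htk : t ≤ k := Nat.find_min' hex (by omega)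
    have hAt1 : A (t-1) < r := htmin _ (by omega)
    have hAt_ub : A t ≤ n - 1 := by
      have h1 := hAsucc (t-1)
      have h2 := (hinc1 (F^[t-1] s)).2
      rw [show t - 1 + 1 = t by omega] at h1
      omega
    have htk' : t < k := by
      rcases Nat.lt_or_ge t k with h | h
      · exact h
      · exfalso
        have : t = k := by omega
        rw [this] at hAt_ub
        omega
    -- lifted positions along the trajectory
    have hval_traj : ∀ j, j ≤ t → (F^[j] s - s).val = A j ∧ F^[j] s - s = ((A j : ℕ) : ZMod n) := by
      intro j
      induction j with
      | zero => intro _; simp [hA0]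
      | succ p ih =>
          intro hp
          obtain ⟨ih1, ih2⟩ := ih (by omega)
          have e1 : F^[p+1] s - s = (F (F^[p] s) - F^[p] s) + (F^[p] s - s) := by
            rw [Function.iterate_succ_apply']
            ring
          have e2 : F^[p+1] s - s = ((A (p+1) : ℕ) : ZMod n) := by
            rw [e1, hF_sub, ih2, hAsucc p]
            push_cast
            ring
          have hlt : A (p+1) < n := by
            have := hAmono (p+1) t hp
            omega
          refine ⟨?_, e2⟩
          rw [e2, ZMod.val_cast_of_lt hlt]
    -- apply the k-wise hypothesis to the trajectory points
    obtain ⟨z, hz⟩ := H (fun i => F^[min i.1 t] s) (by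
      intro i
      exact hiterS _ s hs)
    have hzj : ∀ j, j ≤ t → (z - F^[j] s).val < r := by
      intro j hj
      have := hz ⟨j, by omega⟩
      simpa [min_eq_left hj] using this
    set a := (z - s).val with ha_def
    have han : a < n := ZMod.val_lt _
    have ha : a < r := by
      have := hzj 0 (by omega)
      simpa [ha_def] using this
    have hex2 : ∃ i, a < A i := ⟨t, by omega⟩
    set i := Nat.find hex2 with hi_def
    have hi : a < A i := Nat.find_spec hex2
    have himin : ∀ u, u < i → A u ≤ a := by
      intro u hu
      have := Nat.find_min hex2 hu
      omega
    have hi1 : 1 ≤ i := by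
      rcases Nat.eq_zero_or_pos i with h | h
      · rw [h, hA0] at hi; omega
      · exact h
    have hit : i ≤ t := Nat.find_min' hex2 (by omega)
    have hAi_ub : A i ≤ n - 1 := by
      have := hAmono i t hit
      omega
    -- compute (z - F^[i] s).val
    have hcast : ((a + n - A i : ℕ) : ZMod n) = ((a : ℕ) : ZMod n) - ((A i : ℕ) : ZMod n) := by
      have h7 : (a + n - A i) + A i = a + n := by omega
      have h8 := congrArg (Nat.cast : ℕ → ZMod n) h7
      push_cast at h8
      have h9 := eq_sub_of_add_eq h8
      rw [h9]
      simp [ZMod.natCast_self]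
    have hzi : (z - F^[i] s).val = a + n - A i := by
      have e1 : z - F^[i] s = (z - s) - (F^[i] s - s) := by ring
      have e2 : z - s = ((a : ℕ) : ZMod n) := by rw [ha_def, ZMod.natCast_zmod_val]
      have e3 := (hval_traj i hit).2
      rw [e1, e2, e3, ← hcast, ZMod.val_cast_of_lt (by omega)]
    have h10 := hzj i hit
    rw [hzi] at h10
    -- A i jumps by more than l : contradiction
    have h11 := hAsucc (i-1)
    rw [show i - 1 + 1 = i by omega] at h11
    have h12 := (hinc1 (F^[i-1] s)).2
    have h13 := himin (i-1) (by omega)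
    omega
  -- find a periodic point of F inside S
  obtain ⟨s0, hs0⟩ : S.Nonempty := by
    rw [← Finset.card_pos]; omega
  obtain ⟨u, v, huv, heq⟩ : ∃ u v : ℕ, u ≠ v ∧ F^[u] s0 = F^[v] s0 := by
    obtain ⟨u, v, h1, h2⟩ := Finite.exists_ne_map_eq_of_infinite (fun t : ℕ => F^[t] s0)
    exact ⟨u, v, h1, h2⟩
  set y := F^[min u v] s0 with hy_def
  have hyS : y ∈ S := hiterS _ _ hs0
  have hper : F^[max u v - min u v] y = y := by
    rw [hy_def, ← Function.iterate_add_apply, Nat.sub_add_cancel (min_le_max)]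
    rcases le_total u v with h | h
    · rw [min_eq_left h, max_eq_right h]; exact heq.symm
    · rw [min_eq_right h, max_eq_left h]; exact heq
  have hexq : ∃ q, 1 ≤ q ∧ F^[q] y = y := ⟨max u v - min u v, by
    rcases Nat.lt_or_ge u v with h | h
    · have : min u v < max u v := by rw [min_eq_left h.le, max_eq_right h.le]; omega
      omega
    · have h2 : v < u := by omega
      have : min u v < max u v := by rw [min_eq_right h, max_eq_left h]; omega
      omega, hper⟩
  set q := Nat.find hexq with hq_def
  have hq1 : 1 ≤ q := (Nat.find_spec hexq).1
  have hqy : F^[q] y = y := (Nat.find_spec hexq).2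
  have hqmin : ∀ u', 1 ≤ u' → u' < q → F^[u'] y ≠ y := by
    intro u' h1 h2 h3
    exact Nat.find_min hexq h2 ⟨h1, h3⟩
  have haux : ∀ a b : ℕ, a < b → b < q → F^[a] y = F^[b] y → False := by
    intro a b hab hbq habeq
    have h1 : F^[q - b + a] y = y := by
      rw [Function.iterate_add_apply, habeq, ← Function.iterate_add_apply,
        Nat.sub_add_cancel (by omega)]
      exact hqy
    exact hqmin (q - b + a) (by omega) (by omega) h1
  have hinj_orb : ∀ a b : ℕ, a < q → b < q → F^[a] y = F^[b] y → a = b := by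
    intro a b ha hb hab
    rcases lt_trichotomy a b with h | h | h
    · exact absurd (haux a b h hb hab) (fun x => x)
    · exact h
    · exact absurd (haux b a h ha hab.symm) (fun x => x)
  set Sum := ∑ t ∈ Finset.range q, inc (F^[t] y) with hSum_def
  have hSum_ge : q ≤ Sum := by
    calc q = ∑ _t ∈ Finset.range q, 1 := by simp
      _ ≤ Sum := Finset.sum_le_sum (fun i _ => (hinc1 _).1)
  have hdvd : n ∣ Sum := by
    have hcast : ((Sum : ℕ) : ZMod n) = 0 := by
      have h1 : ∀ t ∈ Finset.range q, ((inc (F^[t] y) : ℕ) : ZMod n)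
          = F^[t+1] y - F^[t] y := by
        intro t _
        rw [← hF_sub (F^[t] y), Function.iterate_succ_apply']
      calc ((Sum : ℕ) : ZMod n) = ∑ t ∈ Finset.range q, ((inc (F^[t] y) : ℕ) : ZMod n) := by
            rw [hSum_def]; push_cast; rfl
        _ = ∑ t ∈ Finset.range q, (F^[t+1] y - F^[t] y) := Finset.sum_congr rfl h1
        _ = F^[q] y - F^[0] y := Finset.sum_range_sub (fun t => F^[t] y) q
        _ = 0 := by rw [hqy]; simp
    exact (ZMod.natCast_eq_zero_iff _ _).mp hcast
  obtain ⟨w, hw⟩ := hdvd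
  have hw1 : 1 ≤ w := by
    rcases Nat.eq_zero_or_pos w with h | h
    · rw [h, Nat.mul_zero] at hw; omega
    · exact h
  -- shift invariance of sums over one period
  have hshift : ∀ g : ZMod n → ℕ,
      ∑ t ∈ Finset.range q, g (F^[t+1] y) = ∑ t ∈ Finset.range q, g (F^[t] y) := by
    intro g
    have h1 := Finset.sum_range_succ' (fun t => g (F^[t] y)) q
    have h2 := Finset.sum_range_succ (fun t => g (F^[t] y)) q
    rw [hqy] at h2
    simp only [Function.iterate_zero_apply] at h1
    omega
  have hshift_i : ∀ i : ℕ, ∀ g : ZMod n → ℕ,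
      ∑ t ∈ Finset.range q, g (F^[t+i] y) = ∑ t ∈ Finset.range q, g (F^[t] y) := by
    intro i
    induction i with
    | zero => intro g; simp
    | succ p ih =>
        intro g
        calc ∑ t ∈ Finset.range q, g (F^[t+(p+1)] y)
            = ∑ t ∈ Finset.range q, (fun x => g (F x)) (F^[t+p] y) := by
              refine Finset.sum_congr rfl (fun t _ => ?_)
              rw [show t+(p+1) = (t+p)+1 by omega, Function.iterate_succ_apply']
          _ = ∑ t ∈ Finset.range q, (fun x => g (F x)) (F^[t] y) := ih (fun x => g (F x))
          _ = ∑ t ∈ Finset.range q, g (F^[t+1] y) := by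
              refine Finset.sum_congr rfl (fun t _ => ?_)
              rw [Function.iterate_succ_apply']
          _ = _ := hshift g
  -- the periodic orbit as a finset
  set P := (Finset.range q).image (fun t => F^[t] y) with hP_def
  have hPcard : P.card = q := by
    rw [hP_def, Finset.card_image_of_injOn, Finset.card_range]
    intro a ha b hb hab
    exact hinj_orb a b (Finset.mem_range.mp ha) (Finset.mem_range.mp hb) hab
  have hPS : ∀ x ∈ P, x ∈ S := by
    intro x hx
    rw [hP_def, Finset.mem_image] at hx
    obtain ⟨t, _, rfl⟩ := hx
    exact hiterS _ _ hyS
  -- disjoint gap sets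
  set G : ZMod n → Finset (ZMod n) :=
    fun x => (Finset.Ico 1 (d x)).image (fun a : ℕ => x + (a : ZMod n)) with hG_def
  have hGcard : ∀ x, (G x).card = d x - 1 := by
    intro x
    rw [hG_def]
    rw [Finset.card_image_of_injOn, Nat.card_Ico]
    intro a ha b hb hab
    simp only [Finset.coe_Ico, Set.mem_Ico] at ha hb
    have hdx := hdle x
    have h1 : ((a : ℕ) : ZMod n) = ((b : ℕ) : ZMod n) := by
      have := hab
      simpa using add_left_cancel this
    have h2 := congrArg ZMod.val h1
    rw [ZMod.val_cast_of_lt (by omega), ZMod.val_cast_of_lt (by omega)] at h2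
    exact h2
  have hGsub : ∀ x ∈ P, G x ⊆ Finset.univ \ S := by
    intro x hx z hz
    rw [hG_def, Finset.mem_image] at hz
    obtain ⟨a, ha, rfl⟩ := hz
    rw [Finset.mem_Ico] at ha
    rw [Finset.mem_sdiff]
    exact ⟨Finset.mem_univ _, hdmin x a ha.1 ha.2⟩
  have hcontr : ∀ x x' : ZMod n, x' ∈ S → ∀ a b : ℕ, a < d x → 1 ≤ b → b < a →
      x + (a : ZMod n) = x' + (b : ZMod n) → False := by
    intro x x' hx' a b ha hb1 hba habeq
    have hdx := hdle x
    have e1 : x' = x + ((a - b : ℕ) : ZMod n) := by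
      rw [Nat.cast_sub (by omega)]
      have := congrArg (fun z => z - ((b : ℕ) : ZMod n)) habeq
      simp only [add_sub_cancel_right] at this
      rw [← this]
      ring
    exact hdmin x (a - b) (by omega) (by omega) (e1 ▸ hx')
  have hGdisj : ∀ x ∈ P, ∀ x' ∈ P, x ≠ x' → Disjoint (G x) (G x') := by
    intro x hx x' hx' hne
    rw [Finset.disjoint_left]
    intro z hz hz'
    rw [hG_def, Finset.mem_image] at hz hz'
    obtain ⟨a, ha, haz⟩ := hz
    obtain ⟨b, hb, hbz⟩ := hz'
    rw [Finset.mem_Ico] at ha hb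
    have habeq : x + (a : ZMod n) = x' + (b : ZMod n) := by rw [haz, hbz]
    rcases lt_trichotomy a b with h | h | h
    · exact hcontr x' x (hPS x hx) b a hb.2 ha.1 h habeq.symm
    · apply hne
      rw [h] at habeq
      simpa using add_right_cancel habeq
    · exact hcontr x x' (hPS x' hx') a b ha.2 hb.1 h habeq
  have hbiU : ∑ x ∈ P, (d x - 1) ≤ n - S.card := by
    have h1 : (P.biUnion G).card = ∑ x ∈ P, (G x).card := Finset.card_biUnion hGdisj
    have h2 : P.biUnion G ⊆ Finset.univ \ S := by
      intro z hz
      rw [Finset.mem_biUnion] at hz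
      obtain ⟨x, hx, hzx⟩ := hz
      exact hGsub x hx hzx
    have h3 : (Finset.univ \ S).card = n - S.card := by
      rw [Finset.card_sdiff_of_subset (Finset.subset_univ S), Finset.card_univ, ZMod.card]
    calc ∑ x ∈ P, (d x - 1) = ∑ x ∈ P, (G x).card :=
          Finset.sum_congr rfl (fun x _ => (hGcard x).symm)
      _ = (P.biUnion G).card := h1.symm
      _ ≤ (Finset.univ \ S).card := Finset.card_le_card h2
      _ = n - S.card := h3
  have hsum_d : ∑ t ∈ Finset.range q, d (F^[t] y) ≤ q + (n - S.card) := by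
    have h1 : ∑ t ∈ Finset.range q, d (F^[t] y) = ∑ x ∈ P, d x := by
      rw [hP_def]
      rw [Finset.sum_image]
      intro a ha b hb hab
      exact hinj_orb a b (Finset.mem_range.mp ha) (Finset.mem_range.mp hb) hab
    have h2 : ∑ x ∈ P, d x = ∑ x ∈ P, (d x - 1) + P.card := by
      calc ∑ x ∈ P, d x = ∑ x ∈ P, ((d x - 1) + 1) :=
            Finset.sum_congr rfl (fun x _ => by have := hd1 x; omega)
        _ = ∑ x ∈ P, (d x - 1) + ∑ _x ∈ P, 1 := Finset.sum_add_distrib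
        _ = ∑ x ∈ P, (d x - 1) + P.card := by rw [Finset.sum_const, smul_eq_mul, mul_one]
    omega
  -- inequality (1)
  have hineq1 : q * l ≤ Sum + (l - 1) := by
    have h1 : q * (l+1) ≤ Sum + ∑ t ∈ Finset.range q, d (F^[t+1] y) := by
      have h2 : ∀ t ∈ Finset.range q, l + 1 ≤ inc (F^[t] y) + d (F^[t+1] y) := by
        intro t _
        have h := key1 (F^[t] y)
        rw [← Function.iterate_succ_apply' F t y] at h
        exact h
      calc q * (l+1) = ∑ _t ∈ Finset.range q, (l+1) := by
            rw [Finset.sum_const, smul_eq_mul, Finset.card_range]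
        _ ≤ ∑ t ∈ Finset.range q, (inc (F^[t] y) + d (F^[t+1] y)) := Finset.sum_le_sum h2
        _ = Sum + ∑ t ∈ Finset.range q, d (F^[t+1] y) := by
            rw [Finset.sum_add_distrib]
    have h3 : ∑ t ∈ Finset.range q, d (F^[t+1] y) = ∑ t ∈ Finset.range q, d (F^[t] y) :=
      hshift d
    have h4 : q * (l+1) = q*l + q := by ring
    omega
  -- inequality (2)
  have hineq2 : k * Sum ≤ q * (n-1) := by
    have h1 : ∑ t ∈ Finset.range q, (∑ i ∈ Finset.range k, inc (F^[i] (F^[t] y)))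
        ≤ q * (n-1) := by
      calc ∑ t ∈ Finset.range q, (∑ i ∈ Finset.range k, inc (F^[i] (F^[t] y)))
          ≤ ∑ _t ∈ Finset.range q, (n-1) :=
            Finset.sum_le_sum (fun t _ => key2 _ (hiterS _ _ hyS))
        _ = q * (n-1) := by rw [Finset.sum_const, smul_eq_mul, Finset.card_range]
    have h2 : ∑ t ∈ Finset.range q, (∑ i ∈ Finset.range k, inc (F^[i] (F^[t] y)))
        = ∑ i ∈ Finset.range k, (∑ t ∈ Finset.range q, inc (F^[t+i] y)) := by
      rw [Finset.sum_comm]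
      refine Finset.sum_congr rfl (fun i _ => Finset.sum_congr rfl (fun t _ => ?_))
      rw [← Function.iterate_add_apply, Nat.add_comm i t]
    have h3 : ∀ i ∈ Finset.range k, ∑ t ∈ Finset.range q, inc (F^[t+i] y) = Sum :=
      fun i _ => hshift_i i inc
    rw [h2, Finset.sum_congr rfl h3, Finset.sum_const, smul_eq_mul, Finset.card_range] at h1
    exact h1
  -- final contradiction
  have hq_le : q ≤ k * w := by
    by_contra hq
    push_neg at hq
    have h1 : (k*w+1) * l ≤ q * l := Nat.mul_le_mul_right l (by omega)
    have h2 : n * w ≤ (k*l) * w := Nat.mul_le_mul_right w hkl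
    have h3 : (k*w+1)*l = (k*l)*w + l := by ring
    omega
  have h5 : q * (n-1) ≤ (k*w) * (n-1) := Nat.mul_le_mul_right _ hq_le
  have h6 : (k*w)*(n-1) + (k*w) = (k*w)*n := by
    rw [← Nat.mul_succ]
    congr 1
    omega
  have h7 : k * Sum = (k*w)*n := by rw [hw]; ring
  have h8 : 1*1 ≤ k*w := Nat.mul_le_mul (by omega) hw1
  omega

/-- **Frankl's interval lemma.** A `k`-wise intersecting family of `σ`-intervals of
length `r ≤ (k−1)n/k` in a cyclic order `σ` on `{1,…,n}` has at most `r` members. -/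
theorem kwise_intervals_bound (n r k : ℕ) (hn : 0 < n) (hr : 0 < r) (hk : 2 ≤ k)
    (hkr : k * r ≤ (k - 1) * n)
    (σ : ZMod n → ℕ) (hinj : Function.Injective σ)
    (hrange : ∀ i, σ i ∈ Finset.Icc 1 n)
    (𝓕 : Finset (Finset ℕ)) (h𝓕 : ∀ F ∈ 𝓕, ∃ x, F = cInterval n σ r x)
    (hint : KWiseIntersecting k 𝓕) :
    𝓕.card ≤ r := by
  classical
  haveI : NeZero n := ⟨hn.ne'⟩
  have hkn : (k-1)*n + n = k*n := by
    have h : (k-1)+1 = k := by omega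
    calc (k-1)*n + n = ((k-1)+1)*n := (Nat.succ_mul _ _).symm
      _ = k*n := by rw [h]
  have hrn : r < n := by
    by_contra h
    push_neg at h
    have h1 : k*n ≤ k*r := Nat.mul_le_mul_left k h
    omega
  have hkl : n ≤ k * (n - r) := by
    have h3 : k*(n-r) + k*r = k*n := by
      rw [← Nat.mul_add]
      congr 1
      omega
    omega
  set S := Finset.univ.filter (fun x : ZMod n => cInterval n σ r x ∈ 𝓕) with hS_def
  have hsub : 𝓕 ⊆ S.image (cInterval n σ r) := by
    intro Fm hFm
    obtain ⟨x, rfl⟩ := h𝓕 Fm hFm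
    exact Finset.mem_image.2 ⟨x, Finset.mem_filter.2 ⟨Finset.mem_univ _, hFm⟩, rfl⟩
  have H : ∀ f : Fin k → ZMod n, (∀ i, f i ∈ S) → ∃ z : ZMod n, ∀ i, (z - f i).val < r := by
    intro f hf
    have hmem : ∀ i, cInterval n σ r (f i) ∈ 𝓕 := fun i => (Finset.mem_filter.mp (hf i)).2
    obtain ⟨v, hv⟩ := hint (fun i => cInterval n σ r (f i)) hmem
    have hv' : ∀ i, ∃ j : ℕ, j < r ∧ σ (f i + (j : ZMod n)) = v := by
      intro i
      have := hv i
      simp only [cInterval, Finset.mem_image, Finset.mem_range] at this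
      obtain ⟨j, hj1, hj2⟩ := this
      exact ⟨j, hj1, hj2⟩
    choose j hj1 hj2 using hv'
    have hk0 : (0 : ℕ) < k := by omega
    set i0 : Fin k := ⟨0, hk0⟩ with hi0_def
    refine ⟨f i0 + ((j i0 : ℕ) : ZMod n), fun i => ?_⟩
    have hσ : σ (f i + ((j i : ℕ) : ZMod n)) = σ (f i0 + ((j i0 : ℕ) : ZMod n)) := by
      rw [hj2 i, hj2 i0]
    have he := hinj hσ
    have hz : f i0 + ((j i0 : ℕ) : ZMod n) - f i = ((j i : ℕ) : ZMod n) := by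
      rw [← he]
      ring
    rw [hz, ZMod.val_cast_of_lt (lt_trans (hj1 i) hrn)]
    exact hj1 i
  calc 𝓕.card ≤ (S.image (cInterval n σ r)).card := Finset.card_le_card hsub
    _ ≤ S.card := Finset.card_image_le
    _ ≤ r := core_bound n r k (n - r) (by omega) hr hrn rfl hk hkl S H
end

section
/- Let k ≥ 2 and let n, r be positive integers with k·r < (k−1)·n. Let σ be a cyclic order on {1,…,n} and let 𝓕 be a k-wise intersecting family of σ-intervals of length r with |𝓕| = r. Then there exists an index x ∈ ℤ/nℤ such that 𝓕 is exactly the family of all σ-intervals of length r that contain the index x (equivalently, that contain the element σ(x)). -/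
open Finset Function

theorem Function.Periodic.sum_range_add {M : Type*} [AddCancelCommMonoid M] {f : ℕ → M}
    {q : ℕ} (hf : Periodic f q) (t : ℕ) :
    ∑ i ∈ range q, f (i + t) = ∑ i ∈ range q, f i := by
  have h := Finset.sum_range_add f t q
  rw [add_comm t, Finset.sum_range_add, add_comm] at h
  simp only [add_comm q, hf _] at h
  simpa only [add_comm t] using (add_left_cancel h).symm

theorem Finset.Nonempty.exists_mem_periodicPts {α : Type*} {S : Finset α} (hS : S.Nonempty)
    {F : α → α} (hF : Set.MapsTo F S S) : ∃ s ∈ S, s ∈ periodicPts F := by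
  obtain ⟨s₀, hs₀⟩ := hS
  have hmaps : ∀ m ∈ range (S.card + 1), F^[m] s₀ ∈ S := fun m _ => hF.iterate m hs₀
  obtain ⟨a, ha, b, hb, hab, heq⟩ :=
    exists_ne_map_eq_of_card_lt_of_maps_to (by simp) hmaps
  wlog h : a < b generalizing a b
  · exact this b hb a ha hab.symm heq.symm (by omega)
  refine ⟨F^[a] s₀, hmaps a ha, mk_mem_periodicPts (Nat.sub_pos_of_lt h) ?_⟩
  rw [IsPeriodicPt, IsFixedPt, ← iterate_add_apply, Nat.sub_add_cancel h.le, heq]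

theorem Nat.false_of_run_and_window_bounds {k r L n q w : ℕ} (hn : r + L = n) (hw : 0 < w)
    (hrL : r < (k - 1) * L) (hrun : q * L ≤ n * w + L) (hwin : (k - 1) * (n * w) + q ≤ q * r) :
    False := by
  subst hn
  obtain ⟨k, rfl⟩ : ∃ k', k = k' + 1 := ⟨k - 1, by cases k <;> simp_all⟩
  simp only [Nat.add_sub_cancel] at hrL hwin
  -- `q·L ≤ w·(r + L) + L < (w·(k + 1) + 1)·L`, and `q` is an integer.
  have hq : q ≤ w * (k + 1) := by
    by_contra! h
    have : (w * (k + 1) + 1) * L ≤ q * L := Nat.mul_le_mul_right _ h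
    nlinarith
  nlinarith

theorem Nat.lt_of_mul_lt_sub_one_mul {k r n : ℕ} (h : k * r < (k - 1) * n) : r < n := by
  by_contra! hnr
  exact absurd h (not_lt.2 ((Nat.mul_le_mul_right n (k.sub_le 1)).trans
    (Nat.mul_le_mul_left k hnr)))

namespace ZMod

variable {n : ℕ}

theorem val_sub_eq_val_sub_add_val_sub (x y z : ZMod n)
    (h : (x - y).val + (y - z).val < n) : (x - z).val = (x - y).val + (y - z).val := by
  rw [← val_add_of_lt h, sub_add_sub_cancel]

theorem val_sub_eq_val_sub_add_sum {r L N : ℕ} (hn : r + L ≤ n) (c : ℕ → ZMod n) (p : ZMod n)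
    (hp : ∀ t ≤ N, (p - c t).val < r) (hc : ∀ t < N, (c (t + 1) - c t).val ≤ L) :
    (p - c 0).val = (p - c N).val + ∑ t ∈ range N, (c (t + 1) - c t).val := by
  induction N with
  | zero => simp
  | succ N ih =>
    have h1 := hp (N + 1) le_rfl
    have h2 := hc N N.lt_succ_self
    rw [ih (fun t ht => hp t (by omega)) (fun t ht => hc t (by omega)), sum_range_succ,
      val_sub_eq_val_sub_add_val_sub p (c (N + 1)) (c N) (by omega)]
    ring

/-- `(p - y).val < r` says that `y` lies in the arc of length `r` ending at `p`. -/
def KWiseInArc (k r : ℕ) (S : Finset (ZMod n)) : Prop :=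
  ∀ f : Fin k → ZMod n, (∀ i, f i ∈ S) → ∃ p, ∀ i, (p - f i).val < r

def IsFarthestJump (S : Finset (ZMod n)) (L : ℕ) (F : ZMod n → ZMod n) : Prop :=
  ∀ s ∈ S, F s ∈ S ∧ 0 < (F s - s).val ∧ (F s - s).val ≤ L ∧
    ∀ t ∈ S, 0 < (t - s).val → (t - s).val ≤ L → (t - s).val ≤ (F s - s).val

def orbitStep (F : ZMod n → ZMod n) (s : ZMod n) (m : ℕ) : ℕ :=
  (F^[m + 1] s - F^[m] s).val

theorem sum_run_length_add_card_le [NeZero n] {ι : Type*} {S : Finset (ZMod n)} {I : Finset ι}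
    {b : ι → ZMod n} (hb : Set.InjOn b I) (hbS : ∀ i ∈ I, b i ∈ S) (ℓ : ι → ℕ)
    (hfree : ∀ i ∈ I, ∀ j, 0 < j → j ≤ ℓ i → b i + j ∉ S) :
    ∑ i ∈ I, ℓ i + S.card ≤ n := by
  set run : (Σ _ : ι, ℕ) → ZMod n := fun x => b x.1 + ((x.2 + 1 : ℕ) : ZMod n)
  -- A run starting strictly inside another one would start at a point of `S`.
  have key : ∀ x ∈ I.sigma (fun i => range (ℓ i)), ∀ y ∈ I.sigma (fun i => range (ℓ i)),
      x.2 ≤ y.2 → run x = run y → x = y := by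
    rintro ⟨i, j⟩ hx ⟨i', j'⟩ hy hjj' heq
    simp only [mem_sigma, mem_range] at hx hy hjj'
    rcases hjj'.lt_or_eq with hlt | rfl
    · refine absurd (hbS i hx.1) ?_
      have : b i = b i' + ((j' - j : ℕ) : ZMod n) := by
        simp only [run] at heq
        push_cast [Nat.cast_sub hlt.le] at heq ⊢
        linear_combination heq
      rw [this]
      exact hfree i' hy.1 _ (by omega) (by omega)
    · have : b i = b i' := add_right_cancel heq
      rw [hb hx.1 hy.1 this]
  have hinj : Set.InjOn run (I.sigma (fun i => range (ℓ i))) := fun x hx y hy h =>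
    (le_total x.2 y.2).elim (key x hx y hy · h) (fun hle => (key y hy x hx hle h.symm).symm)
  have hmaps : ∀ x ∈ I.sigma (fun i => range (ℓ i)), run x ∈ Sᶜ := by
    rintro ⟨i, j⟩ hx
    simp only [mem_sigma, mem_range] at hx
    exact mem_compl.2 (hfree i hx.1 _ (by omega) hx.2)
  have hcard := card_le_card_of_injOn run hmaps hinj
  rw [card_sigma, card_compl, ZMod.card] at hcard
  simp only [card_range] at hcard
  have := S.card_le_univ
  rw [ZMod.card] at this
  omega

theorem exists_isFarthestJump {S : Finset (ZMod n)} {L : ℕ}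
    (h : ∀ s ∈ S, ∃ t ∈ S, 0 < (t - s).val ∧ (t - s).val ≤ L) :
    ∃ F, IsFarthestJump S L F := by
  have : ∀ s ∈ S, ∃ t, t ∈ S ∧ 0 < (t - s).val ∧ (t - s).val ≤ L ∧
      ∀ u ∈ S, 0 < (u - s).val → (u - s).val ≤ L → (u - s).val ≤ (t - s).val := by
    intro s hs
    obtain ⟨t, ht, hmax⟩ := exists_max_image
      (S.filter fun t => 0 < (t - s).val ∧ (t - s).val ≤ L) (fun t => (t - s).val)
      (by obtain ⟨t, ht, h1⟩ := h s hs; exact ⟨t, mem_filter.2 ⟨ht, h1⟩⟩)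
    rw [mem_filter] at ht
    exact ⟨t, ht.1, ht.2.1, ht.2.2, fun u hu h1 h2 => hmax u (mem_filter.2 ⟨hu, h1, h2⟩)⟩
  choose! F hF using this
  exact ⟨F, hF⟩

namespace IsFarthestJump

variable {S : Finset (ZMod n)} {L : ℕ} {F : ZMod n → ZMod n} (hF : IsFarthestJump S L F)
include hF

theorem add_notMem (hL : L < n) {s : ZMod n} (hs : s ∈ S) {j : ℕ} (hj : 0 < j)
    (hjL : (F s - s).val + j ≤ L) : F s + j ∉ S := by
  intro hmem
  have hval : (F s + j - s).val = (F s - s).val + j := by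
    rw [add_sub_right_comm, val_add_of_lt] <;> rw [val_natCast_of_lt (by omega)]
    omega
  have := (hF s hs).2.2.2 _ hmem (by omega) (by omega)
  omega

theorem iterate_mem {s : ZMod n} (hs : s ∈ S) (m : ℕ) : F^[m] s ∈ S :=
  Set.MapsTo.iterate (fun t ht => (hF t ht).1) m hs

theorem orbitStep_pos {s : ZMod n} (hs : s ∈ S) (m : ℕ) : 0 < orbitStep F s m := by
  rw [orbitStep, iterate_succ_apply']
  exact (hF _ (hF.iterate_mem hs m)).2.1

theorem orbitStep_le {s : ZMod n} (hs : s ∈ S) (m : ℕ) : orbitStep F s m ≤ L := by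
  rw [orbitStep, iterate_succ_apply']
  exact (hF _ (hF.iterate_mem hs m)).2.2.1

theorem mul_le_sum_orbitStep_add [NeZero n] (hL : L < n) (hn : n ≤ S.card + L) {s : ZMod n}
    (hs : s ∈ S) (hper : s ∈ periodicPts F) :
    minimalPeriod F s * L ≤ ∑ m ∈ range (minimalPeriod F s), orbitStep F s m + L := by
  set q := minimalPeriod F s
  have hinj : Set.InjOn (fun m => F^[m + 1] s) (range q) := by
    simp only [iterate_succ_apply, coe_range]
    rw [← show minimalPeriod F (F s) = q from minimalPeriod_apply hper]
    exact iterate_injOn_Iio_minimalPeriod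
  have hruns := sum_run_length_add_card_le hinj (fun m _ => hF.iterate_mem hs (m + 1))
    (fun m => L - orbitStep F s m) fun m _ j hj hjL => by
      rw [iterate_succ_apply']
      refine hF.add_notMem hL (hF.iterate_mem hs m) hj ?_
      have := hF.orbitStep_le hs m
      rw [orbitStep, iterate_succ_apply'] at this hjL
      omega
  have hsplit :
      ∑ m ∈ range q, (L - orbitStep F s m) + ∑ m ∈ range q, orbitStep F s m = q * L := by
    rw [← sum_add_distrib, sum_congr rfl fun m _ => Nat.sub_add_cancel (hF.orbitStep_le hs m)]
    simp
  omega

end IsFarthestJump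

theorem orbitStep_periodic (F : ZMod n → ZMod n) (s : ZMod n) :
    Periodic (orbitStep F s) (minimalPeriod F s) := fun m => by
  rw [orbitStep, orbitStep, add_right_comm, iterate_add_minimalPeriod_eq,
    iterate_add_minimalPeriod_eq]

theorem dvd_sum_orbitStep [NeZero n] {F : ZMod n → ZMod n} {s : ZMod n} {q : ℕ}
    (h : IsPeriodicPt F q s) :
    n ∣ ∑ m ∈ range q, orbitStep F s m := by
  rw [← natCast_eq_zero_iff]
  push_cast [orbitStep, natCast_zmod_val]
  rw [sum_range_sub (fun m => F^[m] s), h.eq, iterate_zero_apply, sub_self]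

namespace KWiseInArc

variable {k r : ℕ} {S : Finset (ZMod n)} (h : KWiseInArc k r S)
include h

theorem sum_orbitStep_lt {L : ℕ} {F : ZMod n → ZMod n} (hF : IsFarthestJump S L F)
    (hk : 0 < k) (hn : r + L = n) {s : ZMod n} (hs : s ∈ S) (i : ℕ) :
    ∑ t ∈ range (k - 1), orbitStep F s (i + t) < r := by
  obtain ⟨p, hp⟩ := h (fun t : Fin k => F^[i + t] s) fun t => hF.iterate_mem hs _
  have htele := val_sub_eq_val_sub_add_sum (N := k - 1) hn.le (fun t => F^[i + t] s) p
    (fun t ht => hp ⟨t, by omega⟩) fun t _ => hF.orbitStep_le hs (i + t)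
  have h0 := hp ⟨0, hk⟩
  simp only [add_zero] at htele h0
  simp only [orbitStep, add_assoc]
  omega

theorem mul_sum_orbitStep_add_le {L : ℕ} {F : ZMod n → ZMod n} (hF : IsFarthestJump S L F)
    (hk : 0 < k) (hn : r + L = n) {s : ZMod n} (hs : s ∈ S) :
    (k - 1) * ∑ m ∈ range (minimalPeriod F s), orbitStep F s m + minimalPeriod F s ≤
      minimalPeriod F s * r := by
  calc (k - 1) * ∑ m ∈ range (minimalPeriod F s), orbitStep F s m + minimalPeriod F s
      = ∑ i ∈ range (minimalPeriod F s), (∑ t ∈ range (k - 1), orbitStep F s (i + t) + 1) := by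
        rw [sum_add_distrib, sum_comm,
          sum_congr rfl fun t _ => (orbitStep_periodic F s).sum_range_add t]
        simp
    _ ≤ ∑ _i ∈ range (minimalPeriod F s), r :=
        sum_le_sum fun i _ => h.sum_orbitStep_lt hF hk hn hs i
    _ = minimalPeriod F s * r := by simp

theorem exists_gap [NeZero n] {L : ℕ} (hr : 0 < r) (hn : r + L = n) (hrL : r < (k - 1) * L)
    (hS : r ≤ S.card) : ∃ s ∈ S, ∀ t ∈ S, 0 < (t - s).val → L < (t - s).val := by
  by_contra! hnear
  obtain ⟨F, hF⟩ := exists_isFarthestJump hnear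
  obtain ⟨s, hs, hper⟩ := (card_pos.1 (hr.trans_le hS)).exists_mem_periodicPts
    fun t ht => (hF t ht).1
  have hq := minimalPeriod_pos_of_mem_periodicPts hper
  obtain ⟨w, hw⟩ := dvd_sum_orbitStep (isPeriodicPt_minimalPeriod F s)
  have hD : minimalPeriod F s ≤ ∑ m ∈ range (minimalPeriod F s), orbitStep F s m := by
    simpa using sum_le_sum fun m (_ : m ∈ range (minimalPeriod F s)) =>
      Nat.succ_le_of_lt (hF.orbitStep_pos hs m)
  have hk : 0 < k := Nat.pos_of_ne_zero (by rintro rfl; simp at hrL)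
  have hrun := hF.mul_le_sum_orbitStep_add (by omega) (by omega) hs hper
  have hwin := h.mul_sum_orbitStep_add_le hF hk hn hs
  rw [hw] at hrun hwin
  have hw0 : 0 < w := Nat.pos_of_ne_zero fun h0 => by simp only [h0, mul_zero] at hw; omega
  exact Nat.false_of_run_and_window_bounds hn hw0 hrL hrun hwin

theorem exists_eq_image_sub [NeZero n] (hr : 0 < r) (hkr : k * r < (k - 1) * n)
    (hS : r ≤ S.card) : ∃ x, S = (range r).image fun j : ℕ => x - (j : ZMod n) := by
  have hrn := Nat.lt_of_mul_lt_sub_one_mul hkr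
  have hrL : r < (k - 1) * (n - r) := by
    obtain ⟨k, rfl⟩ : ∃ k', k = k' + 1 := ⟨k - 1, by cases k <;> simp_all⟩
    rw [Nat.add_sub_cancel, Nat.mul_sub]
    rw [Nat.add_sub_cancel, add_mul, one_mul] at hkr
    omega
  obtain ⟨x, -, hgap⟩ := h.exists_gap hr (Nat.add_sub_cancel' hrn.le) hrL hS
  refine ⟨x, eq_of_subset_of_card_le (fun y hy => mem_image.2 ⟨(x - y).val, ?_, by simp⟩)
    (card_image_le.trans ((card_range r).trans_le hS))⟩
  rw [mem_range]
  rcases eq_or_ne y x with rfl | hyx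
  · simpa
  have := hgap y hy (val_pos.2 (sub_ne_zero.2 hyx))
  rw [← neg_sub, neg_val, if_neg (sub_ne_zero.2 hyx)]
  omega

end KWiseInArc

end ZMod

section Intervals

variable {n r : ℕ} [NeZero n] {σ : ZMod n → ℕ}

theorem apply_mem_cInterval_iff (hinj : Injective σ) (hrn : r ≤ n) {p x : ZMod n} :
    σ p ∈ cInterval n σ r x ↔ (p - x).val < r := by
  simp only [cInterval, mem_image, mem_range, hinj.eq_iff]
  constructor
  · rintro ⟨j, hj, rfl⟩
    rwa [add_sub_cancel_left, ZMod.val_natCast_of_lt (hj.trans_le hrn)]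
  · exact fun h => ⟨_, h, by rw [ZMod.natCast_zmod_val, add_sub_cancel]⟩

theorem kWiseInArc_of_kWiseIntersecting_image (hinj : Injective σ) (hrn : r ≤ n) {k : ℕ}
    (hk : 0 < k) {S : Finset (ZMod n)} (h : KWiseIntersecting k (S.image (cInterval n σ r))) :
    ZMod.KWiseInArc k r S := by
  intro f hf
  obtain ⟨v, hv⟩ := h (fun i => cInterval n σ r (f i)) fun i => mem_image_of_mem _ (hf i)
  obtain ⟨j, -, rfl⟩ := mem_image.1 (hv ⟨0, hk⟩)
  exact ⟨_, fun i => (apply_mem_cInterval_iff hinj hrn).1 (hv i)⟩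

end Intervals

theorem kwise_intervals_extremal_general (n r k : ℕ) (hn : 0 < n) (hr : 0 < r) (hk : 2 ≤ k)
    (hkr : k * r < (k - 1) * n)
    (σ : ZMod n → ℕ) (hinj : Function.Injective σ)
    (𝓕 : Finset (Finset ℕ)) (h𝓕 : ∀ F ∈ 𝓕, ∃ x, F = cInterval n σ r x)
    (hint : KWiseIntersecting k 𝓕) (hcard : 𝓕.card = r) :
    ∃ x : ZMod n, ∀ F : Finset ℕ,
      F ∈ 𝓕 ↔ ∃ y : ZMod n, F = cInterval n σ r y ∧ ∃ j : ℕ, j < r ∧ y + (j : ZMod n) = x := by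
  have : NeZero n := ⟨hn.ne'⟩
  set S := univ.filter fun x => cInterval n σ r x ∈ 𝓕
  have h𝓕S : 𝓕 = S.image (cInterval n σ r) := by
    ext F
    simp only [S, mem_image, mem_filter, mem_univ, true_and]
    refine ⟨fun hF => ?_, fun ⟨x, hx, hxF⟩ => hxF ▸ hx⟩
    obtain ⟨x, rfl⟩ := h𝓕 F hF
    exact ⟨x, hF, rfl⟩
  rw [h𝓕S] at hint hcard
  obtain ⟨x, hx⟩ := (kWiseInArc_of_kWiseIntersecting_image hinj
    (Nat.lt_of_mul_lt_sub_one_mul hkr).le (by omega) hint).exists_eq_image_sub hr hkr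
    (hcard.symm.trans_le card_image_le)
  refine ⟨x, fun F => ?_⟩
  rw [h𝓕S, hx]
  simp only [mem_image, mem_range]
  constructor
  · rintro ⟨_, ⟨j, hj, rfl⟩, rfl⟩
    exact ⟨_, rfl, j, hj, sub_add_cancel x j⟩
  · rintro ⟨y, rfl, j, hj, rfl⟩
    exact ⟨_, ⟨j, hj, add_sub_cancel_right y j⟩, rfl⟩

/-- Extremal case of Frankl's interval lemma: if `k·r < (k−1)·n` and a `k`-wise
intersecting family of `σ`-intervals of length `r` has exactly `r` members, then there
is an index `x ∈ ℤ/nℤ` such that `𝓕` consists precisely of all `σ`-intervals of length `r`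
containing the index `x`. -/
theorem kwise_intervals_extremal (n r k : ℕ) (hn : 0 < n) (hr : 0 < r) (hk : 2 ≤ k)
    (hkr : k * r < (k - 1) * n)
    (σ : ZMod n → ℕ) (hinj : Function.Injective σ)
    (hrange : ∀ i, σ i ∈ Finset.Icc 1 n)
    (𝓕 : Finset (Finset ℕ)) (h𝓕 : ∀ F ∈ 𝓕, ∃ x, F = cInterval n σ r x)
    (hint : KWiseIntersecting k 𝓕) (hcard : 𝓕.card = r) :
    ∃ x : ZMod n, ∀ F : Finset ℕ,
      F ∈ 𝓕 ↔ ∃ y : ZMod n, F = cInterval n σ r y ∧ ∃ j : ℕ, j < r ∧ y + (j : ZMod n) = x :=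
  kwise_intervals_extremal_general n r k hn hr hk hkr σ hinj 𝓕 h𝓕 hint hcard
end

section
/- Let k ≥ 2, let n ≤ r satisfy k·r < (k−1)·2n, and let 𝓕 ⊆ 𝓟^r(M_n) be k-wise intersecting. Let σ be a good cyclic ordering of V(M_n) that is 0-saturated with respect to 𝓕. For some 1 ≤ i ≤ n−2, let μ be the good cyclic ordering obtained from σ by swapping the values at indices i and i+1 and simultaneously swapping the values at indices i+n and i+n+1. If μ is saturated with respect to 𝓕, then μ is 0-saturated with respect to 𝓕. -/
/-- A good cyclic ordering of `V(Mₙ)`: a bijection `c : ℤ/2nℤ → {1,…,2n}` such that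
`c(i+n)` is always the partner of `c(i)`. -/
def IsGoodCyclic (n : ℕ) (c : ZMod (2 * n) → ℕ) : Prop :=
  Function.Injective c ∧ (∀ i, c i ∈ Finset.Icc 1 (2 * n)) ∧
    ∀ i, c (i + (n : ZMod (2 * n))) = partnerMn n (c i)

/-- The `c`-interval of length `r` beginning at index `x`: `{c(x), c(x+1), …, c(x+r−1)}`. -/
def gInterval (n : ℕ) (c : ZMod (2 * n) → ℕ) (r : ℕ) (x : ZMod (2 * n)) : Finset ℕ :=
  (Finset.range r).image fun j : ℕ => c (x + (j : ZMod (2 * n)))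

/-- `c` is saturated with respect to `𝓕`: exactly `r` members of `𝓕` are
`c`-intervals of length `r`. -/
def Saturated (n r : ℕ) (𝓕 : Finset (Finset ℕ)) (c : ZMod (2 * n) → ℕ) : Prop :=
  {A : Finset ℕ | A ∈ 𝓕 ∧ ∃ x, A = gInterval n c r x}.ncard = r

/-- `c` is `x`-saturated with respect to `𝓕`: it is saturated and every member of `𝓕`
that is a `c`-interval contains the index `x` (equivalently, the element `c(x)`). -/
def XSaturated (n r : ℕ) (𝓕 : Finset (Finset ℕ)) (c : ZMod (2 * n) → ℕ)
    (x : ZMod (2 * n)) : Prop :=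
  Saturated n r 𝓕 c ∧ ∀ A ∈ 𝓕, (∃ y, A = gInterval n c r y) → c x ∈ A

/-- Adjacent-transposition lemma: if `σ` is `0`-saturated and `μ` is obtained from `σ`
by swapping the values at indices `i, i+1` and simultaneously at `i+n, i+n+1`
(`1 ≤ i ≤ n−2`), and `μ` is saturated, then `μ` is `0`-saturated. -/
theorem transposition_saturated (n r k : ℕ) (hn : 1 ≤ n) (hk : 2 ≤ k) (hnr : n ≤ r)
    (hkr : k * r < (k - 1) * (2 * n))
    (𝓕 : Finset (Finset ℕ)) (h𝓕 : ↑𝓕 ⊆ famP n r)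
    (hint : KWiseIntersecting k 𝓕)
    (σ μ : ZMod (2 * n) → ℕ) (hσ : IsGoodCyclic n σ)
    (hsat : XSaturated n r 𝓕 σ 0)
    (i : ℕ) (hi1 : 1 ≤ i) (hi2 : i ≤ n - 2)
    (hμ : ∀ j : ZMod (2 * n), μ j =
      if j = (i : ZMod (2 * n)) then σ ((i : ZMod (2 * n)) + 1)
      else if j = (i : ZMod (2 * n)) + 1 then σ (i : ZMod (2 * n))
      else if j = (i : ZMod (2 * n)) + (n : ZMod (2 * n)) then
        σ ((i : ZMod (2 * n)) + (n : ZMod (2 * n)) + 1)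
      else if j = (i : ZMod (2 * n)) + (n : ZMod (2 * n)) + 1 then
        σ ((i : ZMod (2 * n)) + (n : ZMod (2 * n)))
      else σ j)
    (hμsat : Saturated n r 𝓕 μ) :
    XSaturated n r 𝓕 μ 0 := by
  classical
  have hn3 : 3 ≤ n := by omega
  haveI hNZ : NeZero (2 * n) := ⟨by omega⟩
  obtain ⟨k', rfl⟩ : ∃ k', k = k' + 1 := ⟨k - 1, by omega⟩
  have hkr' : (k' + 1) * r < k' * (2 * n) := by simpa using hkr
  have hk'2 : 2 ≤ k' := by
    rcases Nat.lt_or_ge k' 2 with h | h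
    · exfalso
      have hk1 : k' = 1 := by omega
      subst hk1
      have : 2 * r < 2 * n := by linarith [hkr']
      omega
    · exact h
  have hr2n : r < 2 * n := by
    have h1 : (k' + 1) * r < (k' + 1) * (2 * n) :=
      lt_of_lt_of_le hkr' (Nat.mul_le_mul_right _ (by omega))
    exact Nat.lt_of_mul_lt_mul_left h1
  have hσinj : Function.Injective σ := hσ.1
  have hci : ∀ a b : ℕ, a < 2 * n → b < 2 * n →
      ((a : ZMod (2 * n)) = (b : ZMod (2 * n))) → a = b := by
    intro a b ha hb h
    have := congrArg ZMod.val h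
    rwa [ZMod.val_cast_of_lt ha, ZMod.val_cast_of_lt hb] at this
  have hzero : ((2 * n : ℕ) : ZMod (2 * n)) = 0 := ZMod.natCast_self _
  have hbound : r + 1 ≤ k' * (2 * n - r) := by
    have h2 : k' * (2 * n) = k' * r + k' * (2 * n - r) := by
      rw [← Nat.mul_add]
      congr 1
      omega
    have h1 : (k' + 1) * r = k' * r + r := by ring
    linarith [hkr']
  -- Step 1: every σ-interval containing index 0 is in 𝓕
  have hF0 : ∀ y : ZMod (2 * n), (∃ t : ℕ, t < r ∧ y + (t : ZMod (2 * n)) = 0) →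
      gInterval n σ r y ∈ 𝓕 := by
    set S := {A : Finset ℕ | A ∈ 𝓕 ∧ ∃ x, A = gInterval n σ r x} with hS
    have hScard : S.ncard = r := hsat.1
    set Y₀ : Finset (ZMod (2 * n)) :=
      (Finset.range r).image (fun t : ℕ => -(t : ZMod (2 * n))) with hY₀
    set T : Finset (Finset ℕ) := Y₀.image (gInterval n σ r) with hT
    have hST : S ⊆ ↑T := by
      rintro A ⟨hA, y, rfl⟩
      have h0 : σ 0 ∈ gInterval n σ r y := hsat.2 _ hA ⟨y, rfl⟩
      simp only [gInterval, Finset.mem_image, Finset.mem_range] at h0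
      obtain ⟨t, ht, hte⟩ := h0
      have h1 : y + (t : ZMod (2 * n)) = 0 := hσinj hte
      have hy : y = -(t : ZMod (2 * n)) := by linear_combination h1
      refine Finset.mem_coe.2 (Finset.mem_image.2 ⟨y, ?_, rfl⟩)
      exact Finset.mem_image.2 ⟨t, Finset.mem_range.2 ht, hy.symm⟩
    have hTS : S = ↑T := by
      refine Set.eq_of_subset_of_ncard_le hST ?_ (T.finite_toSet)
      rw [Set.ncard_coe_finset, hScard]
      exact le_trans Finset.card_image_le
        (le_trans Finset.card_image_le (le_of_eq (Finset.card_range r)))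
    rintro y ⟨t, ht, hyt⟩
    have hy : y ∈ Y₀ := by
      refine Finset.mem_image.2 ⟨t, Finset.mem_range.2 ht, ?_⟩
      linear_combination -hyt
    have hmem : gInterval n σ r y ∈ (↑T : Set (Finset ℕ)) :=
      Finset.mem_coe.2 (Finset.mem_image.2 ⟨y, hy, rfl⟩)
    rw [← hTS] at hmem
    exact hmem.1
  -- Step 2: pointwise facts about μ
  have hμ0 : μ 0 = σ 0 := by
    rw [hμ 0]
    split_ifs with h1 h2 h3 h4
    · exfalso
      have hx : ((0 : ℕ) : ZMod (2 * n)) = ((i : ℕ) : ZMod (2 * n)) := by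
        push_cast; exact h1
      have := hci 0 i (by omega) (by omega) hx
      omega
    · exfalso
      have hx : ((0 : ℕ) : ZMod (2 * n)) = ((i + 1 : ℕ) : ZMod (2 * n)) := by
        push_cast; exact h2
      have := hci 0 (i + 1) (by omega) (by omega) hx
      omega
    · exfalso
      have hx : ((0 : ℕ) : ZMod (2 * n)) = ((i + n : ℕ) : ZMod (2 * n)) := by
        push_cast; exact h3
      have := hci 0 (i + n) (by omega) (by omega) hx
      omega
    · exfalso
      have hx : ((0 : ℕ) : ZMod (2 * n)) = ((i + n + 1 : ℕ) : ZMod (2 * n)) := by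
        push_cast; exact h4
      have := hci 0 (i + n + 1) (by omega) (by omega) hx
      omega
    · rfl
  have hμe : ∀ j : ZMod (2 * n), ∃ e : ℕ, e ≤ 2 ∧
      μ j = σ (j + (e : ZMod (2 * n)) - 1) := by
    intro j
    rw [hμ j]
    split_ifs with h1 h2 h3 h4
    · exact ⟨2, by norm_num, by rw [h1]; congr 1; push_cast; ring⟩
    · exact ⟨0, by norm_num, by rw [h2]; congr 1; push_cast; ring⟩
    · exact ⟨2, by norm_num, by rw [h3]; congr 1; push_cast; ring⟩
    · exact ⟨0, by norm_num, by rw [h4]; congr 1; push_cast; ring⟩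
    · exact ⟨1, by norm_num, by congr 1; push_cast; ring⟩
  have h2ne : ¬ ((2 : ZMod (2 * n)) = 0) := by
    intro h
    have hx : ((2 : ℕ) : ZMod (2 * n)) = ((0 : ℕ) : ZMod (2 * n)) := by push_cast; exact h
    have := hci 2 0 (by omega) (by omega) hx
    omega
  have h1ne : ¬ ((1 : ZMod (2 * n)) = 0) := by
    intro h
    have hx : ((1 : ℕ) : ZMod (2 * n)) = ((0 : ℕ) : ZMod (2 * n)) := by push_cast; exact h
    have := hci 1 0 (by omega) (by omega) hx
    omega
  have hc1 : ∀ j : ZMod (2 * n), μ j = σ (j - 1) →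
      j = (i : ZMod (2 * n)) + 1 ∨ j = (i : ZMod (2 * n)) + (n : ZMod (2 * n)) + 1 := by
    intro j h
    rw [hμ j] at h
    split_ifs at h with h1 h2 h3 h4
    · exfalso
      have hh := hσinj h
      rw [h1] at hh
      exact h2ne (by linear_combination hh)
    · exact Or.inl h2
    · exfalso
      have hh := hσinj h
      rw [h3] at hh
      exact h2ne (by linear_combination hh)
    · exact Or.inr h4
    · exfalso
      have hh := hσinj h
      exact h1ne (by linear_combination hh)
  have hc2 : ∀ j : ZMod (2 * n), μ j = σ (j + 1) →
      j = (i : ZMod (2 * n)) ∨ j = (i : ZMod (2 * n)) + (n : ZMod (2 * n)) := by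
    intro j h
    rw [hμ j] at h
    split_ifs at h with h1 h2 h3 h4
    · exact Or.inl h1
    · exfalso
      have hh := hσinj h
      rw [h2] at hh
      exact h2ne (by linear_combination -hh)
    · exact Or.inr h3
    · exfalso
      have hh := hσinj h
      rw [h4] at hh
      exact h2ne (by linear_combination -hh)
    · exfalso
      have hh := hσinj h
      exact h1ne (by linear_combination -hh)
  -- Main argument
  refine ⟨hμsat, ?_⟩
  rintro A hA ⟨x, hAx⟩
  subst hAx
  by_contra h0
  have hσ0A : σ 0 ∉ gInterval n μ r x := by rwa [← hμ0]
  have hmemA : ∀ a ∈ gInterval n μ r x, ∃ j : ℕ, j < r ∧ a = μ (x + (j : ZMod (2 * n))) := by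
    intro a ha
    simp only [gInterval, Finset.mem_image, Finset.mem_range] at ha
    obtain ⟨j, hj, hje⟩ := ha
    exact ⟨j, hj, hje.symm⟩
  have hmem2 : ∀ j : ℕ, j < r → μ (x + (j : ZMod (2 * n))) ∈ gInterval n μ r x := by
    intro j hj
    simp only [gInterval, Finset.mem_image, Finset.mem_range]
    exact ⟨j, hj, rfl⟩
  have hu0 : ∀ t : ℕ, t < r → x + (t : ZMod (2 * n)) ≠ 0 := by
    intro t ht h
    apply h0
    have := hmem2 t ht
    rwa [h] at this
  set u : ℕ := (-x).val with hu
  have huX : x + (u : ZMod (2 * n)) = 0 := by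
    rw [hu, ZMod.natCast_rightInverse (-x)]
    ring
  have hur : r ≤ u := by
    by_contra h
    exact hu0 u (by omega) huX
  have hu2n : u < 2 * n := ZMod.val_lt _
  have hEl : ∀ a ∈ gInterval n μ r x, ∃ t : ℕ, t < r + 2 ∧
      a = σ (x - 1 + (t : ZMod (2 * n))) := by
    intro a ha
    obtain ⟨j, hj, hje⟩ := hmemA a ha
    obtain ⟨e, he, hμj⟩ := hμe (x + (j : ZMod (2 * n)))
    refine ⟨j + e, by omega, ?_⟩
    rw [hje, hμj]
    congr 1
    push_cast
    ring
  -- the key arc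
  obtain ⟨β, m, hm0, hm3, hm2, hm1⟩ : ∃ (β : ZMod (2 * n)) (m : ℕ), 1 ≤ m ∧
      m ≤ k' * (2 * n - r) ∧
      (∀ t : ℕ, t < m → β + (t : ZMod (2 * n)) ≠ 0) ∧
      (∀ a ∈ gInterval n μ r x, ∃ t : ℕ, t < m ∧ a = σ (β + (t : ZMod (2 * n)))) := by
    rcases eq_or_ne u (2 * n - 1) with hcA | hne1
    · -- Case A : 0 = x - 1
      have hcc : ((2 * n - 1 : ℕ) : ZMod (2 * n)) + 1 = 0 := by
        rw [show (1 : ZMod (2 * n)) = ((1 : ℕ) : ZMod (2 * n)) from by push_cast; rfl,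
          ← Nat.cast_add, show 2 * n - 1 + 1 = 2 * n from by omega]
        exact hzero
      rw [hcA] at huX
      have hx1 : x - 1 = 0 := by linear_combination huX - hcc
      refine ⟨x, min (r + 1) (2 * n - 1), by omega, by omega, ?_, ?_⟩
      · intro t ht h
        have h1 : (t : ZMod (2 * n)) = ((2 * n - 1 : ℕ) : ZMod (2 * n)) := by
          linear_combination h - huX
        have := hci t (2 * n - 1) (by omega) (by omega) h1
        omega
      · intro a ha
        obtain ⟨t', ht', hat⟩ := hEl a ha
        rcases Nat.eq_zero_or_pos t' with h0' | hpos
        · exfalso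
          apply hσ0A
          rw [h0', Nat.cast_zero, add_zero, hx1] at hat
          rwa [hat] at ha
        rcases eq_or_ne t' (2 * n) with h2n' | h2n'
        · exfalso
          apply hσ0A
          rw [h2n', hzero, add_zero, hx1] at hat
          rwa [hat] at ha
        obtain ⟨s, rfl⟩ : ∃ s, t' = s + 1 := ⟨t' - 1, by omega⟩
        refine ⟨s, by omega, ?_⟩
        rw [hat]
        congr 1
        push_cast
        ring
    rcases eq_or_ne u r with hcB | hneB
    · -- Case B : 0 = x + r,  r ≤ 2n - 2
      rw [hcB] at huX
      refine ⟨x - 1, r + 1, by omega, hbound, ?_, ?_⟩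
      · intro t ht h
        have h1 : (t : ZMod (2 * n)) = ((r + 1 : ℕ) : ZMod (2 * n)) := by
          push_cast
          linear_combination h - huX
        have := hci t (r + 1) (by omega) (by omega) h1
        omega
      · intro a ha
        obtain ⟨t', ht', hat⟩ := hEl a ha
        rcases eq_or_ne t' (r + 1) with he' | he'
        · exfalso
          apply hσ0A
          have hxr : x - 1 + ((t' : ℕ) : ZMod (2 * n)) = 0 := by
            rw [he']
            push_cast
            linear_combination huX
          rw [hxr] at hat
          rwa [hat] at ha
        · exact ⟨t', by omega, hat⟩
    -- Case C : r + 1 ≤ u ≤ 2n - 2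
    have hC : r + 1 ≤ u ∧ u ≤ 2 * n - 2 := by omega
    have hr3 : r ≤ 2 * n - 3 := by omega
    have hm2C : ∀ t : ℕ, t < r + 2 → x - 1 + (t : ZMod (2 * n)) ≠ 0 := by
      intro t ht h
      have h1 : (t : ZMod (2 * n)) = ((u + 1 : ℕ) : ZMod (2 * n)) := by
        push_cast
        linear_combination h - huX
      have := hci t (u + 1) (by omega) (by omega) h1
      omega
    by_cases hC1 : r + 2 ≤ k' * (2 * n - r)
    · exact ⟨x - 1, r + 2, by omega, hC1, hm2C, hEl⟩
    have htight : k' * (2 * n - r) = r + 1 := by omega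
    have hrn : r ≠ n := by
      intro h
      have h1 : 2 * n - r = n := by omega
      rw [h1] at htight
      have : 2 * n ≤ k' * n := Nat.mul_le_mul_right _ hk'2
      omega
    by_cases hL0 : σ (x - 1) ∈ gInterval n μ r x
    · by_cases hR0 : σ (x - 1 + ((r + 1 : ℕ) : ZMod (2 * n))) ∈ gInterval n μ r x
      · -- both endpoints present: contradiction with r ≠ n
        exfalso
        obtain ⟨j, hj, hjE⟩ := hmemA _ hL0
        obtain ⟨e, he, hμj⟩ := hμe (x + (j : ZMod (2 * n)))
        have heq : x - 1 = x + (j : ZMod (2 * n)) + (e : ZMod (2 * n)) - 1 :=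
          hσinj (hjE.trans hμj)
        have hje0 : ((j + e : ℕ) : ZMod (2 * n)) = ((0 : ℕ) : ZMod (2 * n)) := by
          push_cast
          linear_combination -heq
        have hje00 : j + e = 0 := hci _ 0 (by omega) (by omega) hje0
        have hj0 : j = 0 := by omega
        rw [hj0, Nat.cast_zero, add_zero] at hjE
        have hxc := hc1 x hjE.symm
        obtain ⟨j', hj', hjE'⟩ := hmemA _ hR0
        obtain ⟨e', he', hμj'⟩ := hμe (x + (j' : ZMod (2 * n)))
        have heq' : x - 1 + ((r + 1 : ℕ) : ZMod (2 * n))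
            = x + (j' : ZMod (2 * n)) + (e' : ZMod (2 * n)) - 1 :=
          hσinj (hjE'.trans hμj')
        have hje1 : ((j' + e' : ℕ) : ZMod (2 * n)) = ((r + 1 : ℕ) : ZMod (2 * n)) := by
          push_cast at heq' ⊢
          linear_combination -heq'
        have hje1' : j' + e' = r + 1 := hci _ _ (by omega) (by omega) hje1
        have he'2 : e' = 2 := by omega
        rw [he'2] at hμj'
        have harg : x + (j' : ZMod (2 * n)) + ((2 : ℕ) : ZMod (2 * n)) - 1
            = x + (j' : ZMod (2 * n)) + 1 := by push_cast; ring
        rw [harg] at hμj'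
        have hxc' := hc2 _ hμj'
        have hrj' : r = j' + 1 := by omega
        rcases hxc with hx1 | hx1 <;> rcases hxc' with hx2 | hx2
        · have hrz : ((r : ℕ) : ZMod (2 * n)) = ((0 : ℕ) : ZMod (2 * n)) := by
            rw [hrj']
            push_cast
            linear_combination hx2 - hx1
          have := hci r 0 hr2n (by omega) hrz
          omega
        · have hrz : ((r : ℕ) : ZMod (2 * n)) = ((n : ℕ) : ZMod (2 * n)) := by
            rw [hrj']
            push_cast
            linear_combination hx2 - hx1
          have := hci r n hr2n (by omega) hrz
          omega
        · have hrz : ((r + n : ℕ) : ZMod (2 * n)) = ((0 : ℕ) : ZMod (2 * n)) := by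
            rw [show r + n = j' + 1 + n from by omega]
            push_cast
            linear_combination hx2 - hx1
          rw [show r + n = (r - n) + 2 * n from by omega, Nat.cast_add, hzero, add_zero] at hrz
          have := hci (r - n) 0 (by omega) (by omega) hrz
          omega
        · have hrz : ((r : ℕ) : ZMod (2 * n)) = ((0 : ℕ) : ZMod (2 * n)) := by
            rw [hrj']
            push_cast
            linear_combination hx2 - hx1
          have := hci r 0 hr2n (by omega) hrz
          omega
      · refine ⟨x - 1, r + 1, by omega, by omega, fun t ht => hm2C t (by omega), ?_⟩
        intro a ha
        obtain ⟨t', ht', hat⟩ := hEl a ha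
        rcases eq_or_ne t' (r + 1) with he' | he'
        · exfalso
          apply hR0
          rw [he'] at hat
          rwa [hat] at ha
        · exact ⟨t', by omega, hat⟩
    · refine ⟨x, r + 1, by omega, by omega, ?_, ?_⟩
      · intro t ht h
        have h1 : (t : ZMod (2 * n)) = (u : ZMod (2 * n)) := by
          linear_combination h - huX
        have := hci t u (by omega) hu2n h1
        omega
      · intro a ha
        obtain ⟨t', ht', hat⟩ := hEl a ha
        rcases Nat.eq_zero_or_pos t' with h0' | hpos
        · exfalso
          apply hL0
          rw [h0', Nat.cast_zero, add_zero] at hat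
          rwa [hat] at ha
        obtain ⟨s, rfl⟩ : ∃ s, t' = s + 1 := ⟨t' - 1, by omega⟩
        refine ⟨s, by omega, ?_⟩
        rw [hat]
        congr 1
        push_cast
        ring
  -- final covering argument
  set L : ℕ := 2 * n - r with hLdef
  have hL0' : 0 < L := by omega
  have hβne : β ≠ 0 := by
    have h := hm2 0 hm0
    rwa [Nat.cast_zero, add_zero] at h
  set a₀ : ℕ := β.val with ha₀
  have ha₀1 : 1 ≤ a₀ := by
    rcases Nat.eq_zero_or_pos a₀ with h | h
    · exact absurd ((ZMod.val_eq_zero β).1 h) hβne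
    · exact h
  have hβcast : ((a₀ : ℕ) : ZMod (2 * n)) = β := by
    rw [ha₀]
    exact ZMod.natCast_rightInverse β
  have ha₀2n : a₀ < 2 * n := by
    rw [ha₀]
    exact ZMod.val_lt β
  have hval : ∀ t : ℕ, t < m → a₀ + t < 2 * n := by
    intro t
    induction t with
    | zero => intro _; omega
    | succ t ih =>
      intro ht
      have h1 : a₀ + t < 2 * n := ih (by omega)
      by_contra hcon
      have h2 : a₀ + (t + 1) = 2 * n := by omega
      apply hm2 (t + 1) ht
      have hcast : β + ((t + 1 : ℕ) : ZMod (2 * n)) = ((a₀ + (t + 1) : ℕ) : ZMod (2 * n)) := by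
        rw [Nat.cast_add a₀ (t + 1), hβcast]
      rw [hcast, h2, hzero]
  have hcastβ : ∀ t : ℕ, β + (t : ZMod (2 * n)) = ((a₀ + t : ℕ) : ZMod (2 * n)) := by
    intro t
    rw [Nat.cast_add a₀ t, hβcast]
  set D : ℕ → ℕ := fun p => min (a₀ + p * L) (2 * n - L) with hD
  have hD1 : ∀ p, 1 ≤ D p := by
    intro p
    simp only [hD]
    exact le_min (le_trans ha₀1 (Nat.le_add_right _ _)) (by omega)
  have hD2 : ∀ p, D p ≤ 2 * n - L := by
    intro p
    simp only [hD]
    exact min_le_right _ _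
  set C : ℕ → Finset ℕ := fun p => gInterval n σ r (((D p + L : ℕ) : ZMod (2 * n))) with hC
  have hCF : ∀ p, C p ∈ 𝓕 := by
    intro p
    simp only [hC]
    apply hF0
    refine ⟨2 * n - (D p + L), by have := hD1 p; have := hD2 p; omega, ?_⟩
    rw [← Nat.cast_add, show D p + L + (2 * n - (D p + L)) = 2 * n from by
      have := hD2 p; omega]
    exact hzero
  have hCdisj : ∀ p q : ℕ, D p ≤ q → q < D p + L →
      σ ((q : ℕ) : ZMod (2 * n)) ∉ C p := by
    intro p q h1 h2 hmem
    simp only [hC, gInterval, Finset.mem_image, Finset.mem_range] at hmem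
    obtain ⟨s, hs, hse⟩ := hmem
    have heqz := hσinj hse
    have heq2 : ((D p + L + s : ℕ) : ZMod (2 * n)) = ((q : ℕ) : ZMod (2 * n)) := by
      rw [Nat.cast_add]
      exact heqz
    have hq' : q + (D p + L + s - q) = D p + L + s := by omega
    have heq3 : ((D p + L + s - q : ℕ) : ZMod (2 * n)) = ((0 : ℕ) : ZMod (2 * n)) := by
      have hthis := congrArg (Nat.cast : ℕ → ZMod (2 * n)) hq'
      rw [Nat.cast_add] at hthis
      rw [Nat.cast_zero]
      linear_combination hthis + heq2
    have hlt : D p + L + s - q < 2 * n := by omega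
    have := hci _ 0 hlt (by omega) heq3
    omega
  set g : ℕ → Finset ℕ := fun a => if a < k' then C a else gInterval n μ r x with hg
  have hfF : ∀ j : Fin (k' + 1), g (j : ℕ) ∈ 𝓕 := by
    intro j
    simp only [hg]
    by_cases h : (j : ℕ) < k'
    · rw [if_pos h]; exact hCF _
    · rw [if_neg h]; exact hA
  obtain ⟨v, hv⟩ := hint (fun j => g (j : ℕ)) hfF
  have hvA : v ∈ gInterval n μ r x := by
    have h : v ∈ g k' := hv ⟨k', by omega⟩
    simp only [hg] at h
    rwa [if_neg (lt_irrefl k')] at h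
  obtain ⟨t, htm, hvt⟩ := hm1 v hvA
  have hq2n : a₀ + t < 2 * n := hval t htm
  set p : ℕ := t / L with hpdef
  have hpk : p < k' := by
    rw [hpdef, Nat.div_lt_iff_lt_mul hL0']
    exact lt_of_lt_of_le htm hm3
  have hps : p * L ≤ t := by
    rw [hpdef]
    exact Nat.div_mul_le_self t L
  have hcov1 : D p ≤ a₀ + t := by
    have hm' : D p ≤ a₀ + p * L := by simp only [hD]; exact min_le_left _ _
    exact le_trans hm' (Nat.add_le_add_left hps a₀)
  have hcov2 : a₀ + t < D p + L := by
    rcases le_or_gt (a₀ + p * L) (2 * n - L) with h | h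
    · have hmin : D p = a₀ + L * p := by
        simp only [hD]
        rw [min_eq_left h, mul_comm]
      have h1 := Nat.div_add_mod t L
      rw [← hpdef] at h1
      have h2 := Nat.mod_lt t hL0'
      rw [hmin]
      linarith
    · have hmin : D p = 2 * n - L := by
        simp only [hD]
        exact min_eq_right (le_of_lt h)
      rw [hmin]
      omega
  have hvc : v ∈ C p := by
    have h : v ∈ g p := hv ⟨p, by omega⟩
    simp only [hg] at h
    rwa [if_pos hpk] at h
  apply hCdisj p (a₀ + t) hcov1 hcov2
  rw [show ((a₀ + t : ℕ) : ZMod (2 * n)) = β + (t : ZMod (2 * n)) from (hcastβ t).symm, ← hvt]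
  exact hvc
end

section
/- Let 1 ≤ r ≤ n and let F be an independent r-subset of M_n. Then the number of good cyclic orderings c of V(M_n) such that F = {c(0), c(1), …, c(r−1)} equals r! · (n−r)! · 2^{n−r}. -/
namespace CGC

def base (n v : ℕ) : ℕ := if v ≤ n then v else v - n

lemma base_mem {n v : ℕ} (h1 : 1 ≤ v) (h2 : v ≤ 2*n) :
    1 ≤ base n v ∧ base n v ≤ n := by
  unfold base; split_ifs <;> omega

lemma partner_mem {n v : ℕ} (h1 : 1 ≤ v) (h2 : v ≤ 2*n) :
    1 ≤ partnerMn n v ∧ partnerMn n v ≤ 2*n := by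
  unfold partnerMn; split_ifs <;> omega

lemma partner_partner {n v : ℕ} (h1 : 1 ≤ v) (h2 : v ≤ 2*n) :
    partnerMn n (partnerMn n v) = v := by
  unfold partnerMn; split_ifs <;> omega

lemma partner_ne {n v : ℕ} (hn : 1 ≤ n) (h1 : 1 ≤ v) : partnerMn n v ≠ v := by
  unfold partnerMn; split_ifs <;> omega

lemma base_partner {n v : ℕ} (h1 : 1 ≤ v) (h2 : v ≤ 2*n) :
    base n (partnerMn n v) = base n v := by
  unfold base partnerMn; split_ifs <;> omega

lemma base_eq_cases {n u v : ℕ} (hu1 : 1 ≤ u) (hu2 : u ≤ 2*n)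
    (hv1 : 1 ≤ v) (hv2 : v ≤ 2*n) (h : base n u = base n v) :
    u = v ∨ u = partnerMn n v := by
  unfold base at h; unfold partnerMn; split_ifs at h ⊢ <;> omega

/-- base is injective on an independent set. -/
lemma base_injOn {n : ℕ} {F : Finset ℕ} (hF : IsIndepMn n F) :
    ∀ a ∈ F, ∀ b ∈ F, base n a = base n b → a = b := by
  intro a ha b hb h
  have ha' := Finset.mem_Icc.mp (hF.1 ha)
  have hb' := Finset.mem_Icc.mp (hF.1 hb)
  rcases base_eq_cases ha'.1 ha'.2 hb'.1 hb'.2 h with h1 | h1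
  · exact h1
  · exfalso
    rcases le_or_gt b n with hbn | hbn
    · have : a = b + n := by simpa [partnerMn, hbn] using h1
      exact hF.2 b (Finset.mem_Icc.mpr ⟨hb'.1, hbn⟩) ⟨hb, this ▸ ha⟩
    · have ha2 : a = b - n := by simpa [partnerMn, Nat.not_le.mpr hbn] using h1
      have h1n : 1 ≤ a ∧ a ≤ n := ⟨by omega, by omega⟩
      refine hF.2 a (Finset.mem_Icc.mpr h1n) ⟨ha, ?_⟩
      have h2 : a + n = b := by omega
      rw [h2]; exact hb

variable (n r : ℕ) (F : Finset ℕ)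

/-- the set of bases not used by F -/
def Tset : Finset ℕ := Finset.Icc 1 n \ F.image (base n)

/-- first-half values of the cyclic ordering determined by data (f, g, ε) -/
def half (f : Fin r → ℕ) (g : Fin (n - r) → ℕ) (ε : Fin (n - r) → Bool) (k : ℕ) : ℕ :=
  if hk : k < r then f ⟨k, hk⟩
  else if hk2 : k - r < n - r then
    (if ε ⟨k - r, hk2⟩ then g ⟨k - r, hk2⟩ else g ⟨k - r, hk2⟩ + n)
  else 0

def cfun (f : Fin r → ℕ) (g : Fin (n - r) → ℕ) (ε : Fin (n - r) → Bool)
    (i : ZMod (2 * n)) : ℕ :=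
  if i.val < n then half n r f g ε i.val
  else partnerMn n (half n r f g ε (i.val - n))

lemma val_add_n {n : ℕ} (hn : 1 ≤ n) (i : ZMod (2*n)) :
    haveI : NeZero (2*n) := ⟨by omega⟩
    (i + (n : ZMod (2*n))).val = if i.val < n then i.val + n else i.val - n := by
  haveI : NeZero (2*n) := ⟨by omega⟩
  have hlt := ZMod.val_lt i
  rw [ZMod.val_add, ZMod.val_natCast_of_lt (by omega)]
  split_ifs with h
  · exact Nat.mod_eq_of_lt (by omega)
  · rw [show i.val + n = (i.val - n) + 1 * (2*n) by omega, Nat.add_mul_mod_self_right,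
      Nat.mod_eq_of_lt (by omega)]

end CGC

namespace CGC
set_option maxHeartbeats 1000000

variable {n r : ℕ} {F : Finset ℕ}

lemma half_of_lt (f : Fin r → ℕ) (g : Fin (n - r) → ℕ) (ε : Fin (n - r) → Bool)
    (j : Fin r) (k : ℕ) (hk : k = j.1) : half n r f g ε k = f j := by
  subst hk; unfold half; rw [dif_pos j.2]

lemma half_of_ge (hrn : r ≤ n) (f : Fin r → ℕ) (g : Fin (n - r) → ℕ) (ε : Fin (n - r) → Bool)
    (j : Fin (n - r)) (k : ℕ) (hk : k = r + j.1) :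
    half n r f g ε k = if ε j then g j else g j + n := by
  subst hk; unfold half
  rw [dif_neg (by omega)]
  rw [dif_pos (show r + j.1 - r < n - r by have := j.2; omega)]
  have hj : (⟨r + j.1 - r, show r + j.1 - r < n - r by have := j.2; omega⟩ : Fin (n - r)) = j :=
    Fin.ext (by simp)
  rw [hj]

lemma half_eq_cfun (hn : 1 ≤ n) (f : Fin r → ℕ) (g : Fin (n - r) → ℕ) (ε : Fin (n - r) → Bool)
    (k : ℕ) (hk : k < n) : half n r f g ε k = cfun n r f g ε (k : ZMod (2*n)) := by
  haveI : NeZero (2*n) := ⟨by omega⟩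
  unfold cfun
  rw [ZMod.val_natCast_of_lt (by omega), if_pos hk]

lemma cfun_eq_of (hn : 1 ≤ n) (f : Fin r → ℕ) (g : Fin (n - r) → ℕ) (ε : Fin (n - r) → Bool)
    (c : ZMod (2*n) → ℕ) (hgood : IsGoodCyclic n c)
    (hhalf : ∀ k < n, half n r f g ε k = c (k : ZMod (2*n))) : cfun n r f g ε = c := by
  haveI : NeZero (2*n) := ⟨by omega⟩
  funext i
  have hi : i.val < 2*n := ZMod.val_lt i
  unfold cfun
  split_ifs with h
  · rw [hhalf _ h, ZMod.natCast_zmod_val]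
  · rw [hhalf _ (by omega)]
    have h2 : ((↑(i.val - n) + ↑n : ZMod (2*n))) = i := by
      rw [← Nat.cast_add, show i.val - n + n = i.val by omega]
      exact ZMod.natCast_zmod_val i
    calc partnerMn n (c ↑(i.val - n)) = c (↑(i.val - n) + ↑n) := (hgood.2.2 _).symm
      _ = c i := by rw [h2]

section Good

variable (hn : 1 ≤ n) (hr : 1 ≤ r) (hrn : r ≤ n) (hF : IsIndepMn n F)
  (f : Fin r → ℕ) (g : Fin (n - r) → ℕ) (ε : Fin (n - r) → Bool)
  (hf : ∀ k, f k ∈ F) (hfinj : Function.Injective f)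
  (hg : ∀ k, g k ∈ Tset n F) (hginj : Function.Injective g)

include hn hrn hF hf hg

lemma half_bounds : ∀ k < n, 1 ≤ half n r f g ε k ∧ half n r f g ε k ≤ 2*n := by
  intro k hk
  by_cases hkr : k < r
  · rw [half_of_lt f g ε ⟨k, hkr⟩ k rfl]
    exact Finset.mem_Icc.mp (hF.1 (hf _))
  · rw [half_of_ge hrn f g ε ⟨k - r, by omega⟩ k (show k = r + (k - r) by omega)]
    have := Finset.mem_sdiff.mp (hg ⟨k - r, by omega⟩)
    have h2 := Finset.mem_Icc.mp this.1
    split_ifs <;> omega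

include hfinj hginj

lemma base_half_inj : ∀ k1 < n, ∀ k2 < n,
    base n (half n r f g ε k1) = base n (half n r f g ε k2) → k1 = k2 := by
  have hbase : ∀ k, ∀ (hk : k < n), ∀ (hrk : r ≤ k), base n (half n r f g ε k) = g ⟨k - r, by omega⟩ := by
    intro k hk hrk
    rw [half_of_ge hrn f g ε ⟨k - r, by omega⟩ k (show k = r + (k - r) by omega)]
    have := Finset.mem_sdiff.mp (hg ⟨k - r, by omega⟩)
    have h2 := Finset.mem_Icc.mp this.1
    unfold base; split_ifs <;> omega
  have hbaseS : ∀ k < r, base n (half n r f g ε k) ∈ F.image (base n) := by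
    intro k hk
    rw [half_of_lt f g ε ⟨k, hk⟩ k rfl]
    exact Finset.mem_image_of_mem _ (hf _)
  have hgT : ∀ j : Fin (n - r), g j ∉ F.image (base n) := fun j =>
    (Finset.mem_sdiff.mp (hg j)).2
  intro k1 hk1 k2 hk2 h
  by_cases h1 : k1 < r <;> by_cases h2 : k2 < r
  · rw [half_of_lt f g ε ⟨k1, h1⟩ k1 rfl, half_of_lt f g ε ⟨k2, h2⟩ k2 rfl] at h
    have := base_injOn hF _ (hf ⟨k1, h1⟩) _ (hf ⟨k2, h2⟩) h
    have := hfinj this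
    exact congrArg Fin.val this
  · exfalso
    rw [hbase k2 hk2 (by omega)] at h
    exact hgT _ (h ▸ hbaseS k1 h1)
  · exfalso
    rw [hbase k1 hk1 (by omega)] at h
    exact hgT _ (h.symm ▸ hbaseS k2 h2)
  · rw [hbase k1 hk1 (by omega), hbase k2 hk2 (by omega)] at h
    have := hginj h
    have := congrArg Fin.val this
    simp only at this
    omega

lemma half_inj : ∀ k1 < n, ∀ k2 < n,
    half n r f g ε k1 = half n r f g ε k2 → k1 = k2 := fun k1 hk1 k2 hk2 h =>
  base_half_inj hn hrn hF f g ε hf hfinj hg hginj k1 hk1 k2 hk2 (congrArg (base n) h)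

lemma half_ne_partner : ∀ k1 < n, ∀ k2 < n,
    half n r f g ε k1 ≠ partnerMn n (half n r f g ε k2) := by
  intro k1 hk1 k2 hk2 h
  have hb2 := half_bounds hn hrn hF f g ε hf hg k2 hk2
  have hb1 := half_bounds hn hrn hF f g ε hf hg k1 hk1
  have hbase : base n (half n r f g ε k1) = base n (half n r f g ε k2) := by
    rw [h, base_partner hb2.1 hb2.2]
  have hk12 := base_half_inj hn hrn hF f g ε hf hfinj hg hginj k1 hk1 k2 hk2 hbase
  subst hk12
  exact partner_ne hn hb1.1 h.symm

include hr in
lemma cfun_good (hfsurj : ∀ a ∈ F, ∃ k : Fin r, f k = a) :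
    IsGoodCyclic n (cfun n r f g ε) ∧
      F = (Finset.range r).image fun j : ℕ => cfun n r f g ε (j : ZMod (2*n)) := by
  haveI : NeZero (2*n) := ⟨by omega⟩
  have hb := half_bounds hn hrn hF f g ε hf hg
  have hinj := half_inj hn hrn hF f g ε hf hfinj hg hginj
  have hnep := half_ne_partner hn hrn hF f g ε hf hfinj hg hginj
  have hgood : IsGoodCyclic n (cfun n r f g ε) := by
    refine ⟨?_, ?_, ?_⟩
    · intro i j h
      have hi : i.val < 2*n := ZMod.val_lt i
      have hj : j.val < 2*n := ZMod.val_lt j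
      unfold cfun at h
      split_ifs at h with h1 h2 h2
      · exact ZMod.val_injective _ (hinj _ h1 _ h2 h)
      · exact absurd h (hnep _ h1 _ (by omega))
      · exact absurd h.symm (hnep _ h2 _ (by omega))
      · have h3 := congrArg (partnerMn n) h
        rw [partner_partner (hb _ (by omega)).1 (hb _ (by omega)).2,
          partner_partner (hb _ (by omega)).1 (hb _ (by omega)).2] at h3
        have := hinj _ (by omega) _ (by omega) h3
        exact ZMod.val_injective _ (by omega)
    · intro i
      have hi : i.val < 2*n := ZMod.val_lt i
      unfold cfun
      split_ifs with h1
      · exact Finset.mem_Icc.mpr (hb _ h1)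
      · have := hb (i.val - n) (by omega)
        exact Finset.mem_Icc.mpr (partner_mem this.1 this.2)
    · intro i
      have hi : i.val < 2*n := ZMod.val_lt i
      have hv := val_add_n hn i
      rcases lt_or_ge i.val n with h | h
      · have hv2 : (i + (n : ZMod (2*n))).val = i.val + n := by rw [hv]; exact if_pos h
        unfold cfun
        rw [hv2, if_neg (by omega), if_pos h, show i.val + n - n = i.val from by omega]
      · have hv2 : (i + (n : ZMod (2*n))).val = i.val - n := by rw [hv]; exact if_neg (by omega)
        unfold cfun
        rw [hv2, if_pos (by omega), if_neg (by omega),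
          partner_partner (hb _ (by omega)).1 (hb _ (by omega)).2]
  refine ⟨hgood, ?_⟩
  ext a
  simp only [Finset.mem_image, Finset.mem_range]
  constructor
  · intro ha
    obtain ⟨k, hk⟩ := hfsurj a ha
    refine ⟨k.1, k.2, ?_⟩
    rw [← half_eq_cfun hn f g ε k.1 (by omega), half_of_lt f g ε k k.1 rfl, hk]
  · rintro ⟨j, hj, rfl⟩
    rw [← half_eq_cfun hn f g ε j (by omega), half_of_lt f g ε ⟨j, hj⟩ j rfl]
    exact hf _

end Good

end CGC

namespace CGC

lemma Tset_card {n r : ℕ} {F : Finset ℕ} (hn : 1 ≤ n) (hrn : r ≤ n) (hF : IsIndepMn n F)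
    (hcard : F.card = r) : (Tset n F).card = n - r := by
  have hsub : F.image (base n) ⊆ Finset.Icc 1 n := by
    intro x hx
    obtain ⟨a, ha, rfl⟩ := Finset.mem_image.mp hx
    have := Finset.mem_Icc.mp (hF.1 ha)
    exact Finset.mem_Icc.mpr (base_mem this.1 this.2)
  have himg : (F.image (base n)).card = r := by
    rw [Finset.card_image_of_injOn (fun a ha b hb h => base_injOn hF a ha b hb h), hcard]
  rw [Tset, Finset.card_sdiff_of_subset hsub, himg, Nat.card_Icc]
  omega

end CGC


/-- An independent `r`-subset `F` of `Mₙ` (`1 ≤ r ≤ n`) is the initial interval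
`{c(0),…,c(r−1)}` of exactly `r!·(n−r)!·2^(n−r)` good cyclic orderings `c`. -/
theorem count_goodCyclic_indep (n r : ℕ) (hn : 1 ≤ n) (hr : 1 ≤ r) (hrn : r ≤ n)
    (F : Finset ℕ) (hF : IsIndepMn n F) (hcard : F.card = r) :
    Nat.card {c : ZMod (2 * n) → ℕ // IsGoodCyclic n c ∧
        F = (Finset.range r).image fun j : ℕ => c (j : ZMod (2 * n))} =
      r.factorial * (n - r).factorial * 2 ^ (n - r) := by
  haveI : NeZero (2*n) := ⟨by omega⟩
  classical
  set A := (Fin r ≃ {x // x ∈ F}) × (Fin (n - r) ≃ {x // x ∈ CGC.Tset n F}) ×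
    (Fin (n - r) → Bool) with hA
  have hbij : Function.Bijective (fun p : A =>
      (⟨CGC.cfun n r (fun k => ((p.1 k : ℕ))) (fun k => ((p.2.1 k : ℕ))) p.2.2, by
        have := CGC.cfun_good hn hr hrn hF (fun k => ((p.1 k : ℕ))) (fun k => ((p.2.1 k : ℕ)))
          p.2.2 (fun k => (p.1 k).2) (Subtype.val_injective.comp p.1.injective)
          (fun k => (p.2.1 k).2) (Subtype.val_injective.comp p.2.1.injective)
          (fun a ha => ⟨p.1.symm ⟨a, ha⟩, by simp⟩)
        exact this⟩ :
      {c : ZMod (2 * n) → ℕ // IsGoodCyclic n c ∧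
        F = (Finset.range r).image fun j : ℕ => c (j : ZMod (2 * n))})) := by
    constructor
    · intro p q h
      have hc := congrArg Subtype.val h
      simp only at hc
      have hhalf : ∀ k, k < n → CGC.half n r (fun k => ((p.1 k : ℕ))) (fun k => ((p.2.1 k : ℕ))) p.2.2 k
          = CGC.half n r (fun k => ((q.1 k : ℕ))) (fun k => ((q.2.1 k : ℕ))) q.2.2 k := by
        intro k hk
        rw [CGC.half_eq_cfun hn _ _ _ k hk, CGC.half_eq_cfun hn _ _ _ k hk, hc]
      have h1 : p.1 = q.1 := by
        apply Equiv.ext; intro k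
        apply Subtype.ext
        have := hhalf k.1 (by omega)
        rwa [CGC.half_of_lt _ _ _ k k.1 rfl, CGC.half_of_lt _ _ _ k k.1 rfl] at this
      have h23 : ∀ k : Fin (n - r), (p.2.1 k : ℕ) = (q.2.1 k : ℕ) ∧ p.2.2 k = q.2.2 k := by
        intro k
        have hk := k.2
        have hhk := hhalf (r + k.1) (by omega)
        rw [CGC.half_of_ge hrn _ _ _ k (r + k.1) rfl,
          CGC.half_of_ge hrn _ _ _ k (r + k.1) rfl] at hhk
        have hp := Finset.mem_Icc.mp (Finset.mem_sdiff.mp (p.2.1 k).2).1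
        have hq := Finset.mem_Icc.mp (Finset.mem_sdiff.mp (q.2.1 k).2).1
        cases hb1 : p.2.2 k <;> cases hb2 : q.2.2 k <;> rw [hb1, hb2] at hhk <;>
          simp only [if_true, if_false, Bool.false_eq_true, ite_true, ite_false] at hhk <;>
          first
          | exact ⟨by omega, rfl⟩
          | (exfalso; omega)
      exact Prod.ext h1 (Prod.ext (Equiv.ext fun k => Subtype.ext (h23 k).1)
        (funext fun k => (h23 k).2))
    · rintro ⟨c, ⟨hcinj, hcmem, hcshift⟩, hFc⟩
      have hcb : ∀ i, 1 ≤ c i ∧ c i ≤ 2*n := fun i => Finset.mem_Icc.mp (hcmem i)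
      have hcast : ∀ a b : ℕ, a < 2*n → b < 2*n → c (a : ZMod (2*n)) = c b → a = b := by
        intro a b ha hb h
        have h2 := congrArg ZMod.val (hcinj h)
        rwa [ZMod.val_natCast_of_lt ha, ZMod.val_natCast_of_lt hb] at h2
      have hshift' : ∀ j : ℕ, c ((j + n : ℕ) : ZMod (2*n)) = partnerMn n (c j) := by
        intro j; rw [Nat.cast_add]; exact hcshift _
      have hmemF : ∀ j, j < r → c (j : ZMod (2*n)) ∈ F := by
        intro j hj; rw [hFc]; exact Finset.mem_image.mpr ⟨j, Finset.mem_range.mpr hj, rfl⟩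
      have hFmem : ∀ a ∈ F, ∃ j, j < r ∧ c (j : ZMod (2*n)) = a := by
        intro a ha; rw [hFc] at ha; obtain ⟨j, hj, hja⟩ := Finset.mem_image.mp ha
        exact ⟨j, Finset.mem_range.mp hj, hja⟩
      have hf0bij : Function.Bijective (fun k : Fin r =>
          (⟨c (k.1 : ZMod (2*n)), hmemF k.1 k.2⟩ : {x // x ∈ F})) := by
        rw [Fintype.bijective_iff_injective_and_card]
        refine ⟨?_, by simp [Fintype.card_coe, hcard]⟩
        intro k1 k2 h
        have := congrArg Subtype.val h
        simp only at this
        exact Fin.ext (hcast _ _ (by omega) (by omega) this)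
      have hgmem : ∀ k : Fin (n - r), CGC.base n (c ((r + k.1 : ℕ) : ZMod (2*n))) ∈ CGC.Tset n F := by
        intro k
        have hk : r + k.1 < n := by have := k.2; omega
        have hb := hcb ((r + k.1 : ℕ) : ZMod (2*n))
        refine Finset.mem_sdiff.mpr ⟨Finset.mem_Icc.mpr (CGC.base_mem hb.1 hb.2), ?_⟩
        intro hmem
        obtain ⟨a, haF, hab⟩ := Finset.mem_image.mp hmem
        obtain ⟨j, hj, rfl⟩ := hFmem a haF
        have hbj := hcb ((j : ℕ) : ZMod (2*n))
        rcases CGC.base_eq_cases hb.1 hb.2 hbj.1 hbj.2 hab.symm with h | h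
        · have := hcast _ _ (by omega) (by omega) h
          omega
        · rw [← hshift' j] at h
          have := hcast _ _ (by omega) (by omega) h
          omega
      have hg0bij : Function.Bijective (fun k : Fin (n - r) =>
          (⟨CGC.base n (c ((r + k.1 : ℕ) : ZMod (2*n))), hgmem k⟩ : {x // x ∈ CGC.Tset n F})) := by
        rw [Fintype.bijective_iff_injective_and_card]
        refine ⟨?_, by simp [Fintype.card_coe, CGC.Tset_card hn hrn hF hcard]⟩
        intro k1 k2 h
        have h' := congrArg Subtype.val h
        simp only at h'
        have hb1 := hcb ((r + k1.1 : ℕ) : ZMod (2*n))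
        have hb2 := hcb ((r + k2.1 : ℕ) : ZMod (2*n))
        have hk1 : r + k1.1 < n := by have := k1.2; omega
        have hk2 : r + k2.1 < n := by have := k2.2; omega
        rcases CGC.base_eq_cases hb1.1 hb1.2 hb2.1 hb2.2 h' with h2 | h2
        · have := hcast _ _ (by omega) (by omega) h2
          exact Fin.ext (by omega)
        · rw [← hshift' _] at h2
          have := hcast _ _ (by omega) (by omega) h2
          omega
      refine ⟨⟨Equiv.ofBijective _ hf0bij, Equiv.ofBijective _ hg0bij,
        fun k => decide (c ((r + k.1 : ℕ) : ZMod (2*n)) ≤ n)⟩, ?_⟩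
      apply Subtype.ext
      apply CGC.cfun_eq_of hn _ _ _ c ⟨hcinj, hcmem, hcshift⟩
      intro k hk
      by_cases hkr : k < r
      · rw [CGC.half_of_lt _ _ _ ⟨k, hkr⟩ k rfl]
        rfl
      · rw [CGC.half_of_ge hrn _ _ _ ⟨k - r, by omega⟩ k (show k = r + (k - r) by omega)]
        show (if decide (c ((r + (k - r) : ℕ) : ZMod (2*n)) ≤ n) = true
          then CGC.base n (c ((r + (k - r) : ℕ) : ZMod (2*n)))
          else CGC.base n (c ((r + (k - r) : ℕ) : ZMod (2*n))) + n) = c (k : ZMod (2*n))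
        have hkk : (r + (k - r) : ℕ) = k := by omega
        rw [hkk]
        have hbk := hcb ((k : ℕ) : ZMod (2*n))
        by_cases hc : c ((k : ℕ) : ZMod (2*n)) ≤ n
        · simp [CGC.base, hc]
        · simp [CGC.base, hc]
          omega
  rw [← Nat.card_congr (Equiv.ofBijective _ hbij), hA, Nat.card_prod, Nat.card_prod]
  have c1 : Nat.card (Fin r ≃ {x // x ∈ F}) = r.factorial := by
    have e : Fin r ≃ {x // x ∈ F} :=
      (Fintype.equivFinOfCardEq (by simp [Fintype.card_coe, hcard])).symm
    rw [Nat.card_eq_fintype_card, Fintype.card_equiv e]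
    simp
  have c2 : Nat.card (Fin (n - r) ≃ {x // x ∈ CGC.Tset n F}) = (n - r).factorial := by
    have e : Fin (n - r) ≃ {x // x ∈ CGC.Tset n F} :=
      (Fintype.equivFinOfCardEq (by simp [Fintype.card_coe, CGC.Tset_card hn hrn hF hcard])).symm
    rw [Nat.card_eq_fintype_card, Fintype.card_equiv e]
    simp
  have c3 : Nat.card (Fin (n - r) → Bool) = 2 ^ (n - r) := by
    simp [Nat.card_eq_fintype_card]
  rw [c1, c2, c3, mul_assoc]
end
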